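/- arXiv:2511.12687 — 8 statements merged into one kernel-verified Lean document; each statement's English description precedes it below -/
import Mathlib

section
/- Suppose in addition that m := E[ξ_1 − 1] = ∑_{i≥1}(1 − q_i) < ∞, and set r_p := ⌈ p·m / ((1−p)·|log(1−p)|) ⌉ for p ∈ (0,1). Then for every p ∈ (0,1) and every r ≥ 0: (1−p)^r ≤ P(R_p > r) ≤ (1−p)^r · exp(p·m/(1−p)) ≤ (1−p)^{r − r_p}. In particular, a Geometric(1−p) random variable G with P(G > r) = (1−p)^r satisfies G ≼ R_p ≼ G + r_p in the stochastic order. -/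
/-!
Each factor satisfies `1 - p ≤ 1 - p q_i`, which gives the lower bound. For the upper bound write
`1 - p q_i = (1 - p) (1 + p (1 - q_i) / (1 - p)) ≤ (1 - p) exp (p (1 - q_i) / (1 - p))`; the product of
the exponentials is controlled by the tail sum `∑ (1 - q_i) ≤ m`. Finally `exp x ≤ a ^ (-n)` as soon as
`x ≤ n |log a|`, which is what the choice of `r_p` guarantees.
-/

open Finset Real

lemma one_sub_mul_le_mul_exp {p : ℝ} (hp : p < 1) (x : ℝ) :
    1 - p * x ≤ (1 - p) * exp (p * (1 - x) / (1 - p)) := by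
  have h1p : 0 < 1 - p := sub_pos.2 hp
  calc 1 - p * x = (1 - p) * (p * (1 - x) / (1 - p) + 1) := by field_simp; ring
    _ ≤ (1 - p) * exp (p * (1 - x) / (1 - p)) := by gcongr; exact add_one_le_exp _

section ProductBounds

variable {p : ℝ} {q : ℕ → ℝ}

lemma pow_le_prod_Icc_one_sub_mul (hp0 : 0 ≤ p) (hp1 : p ≤ 1) (hq1 : ∀ i, q i ≤ 1) (r : ℕ) :
    (1 - p) ^ r ≤ ∏ i ∈ Icc 1 r, (1 - p * q i) := by
  calc (1 - p) ^ r = ∏ _i ∈ Icc 1 r, (1 - p) := by simp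
    _ ≤ ∏ i ∈ Icc 1 r, (1 - p * q i) :=
      prod_le_prod (fun _ _ => sub_nonneg.2 hp1) fun i _ => by nlinarith [hq1 i]

lemma prod_Icc_one_sub_mul_le (hp : p < 1) (hfac : ∀ i, 0 ≤ 1 - p * q i) (r : ℕ) :
    ∏ i ∈ Icc 1 r, (1 - p * q i) ≤
      (1 - p) ^ r * exp (p / (1 - p) * ∑ i ∈ Icc 1 r, (1 - q i)) := by
  calc ∏ i ∈ Icc 1 r, (1 - p * q i)
      ≤ ∏ i ∈ Icc 1 r, ((1 - p) * exp (p * (1 - q i) / (1 - p))) :=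
        prod_le_prod (fun i _ => hfac i) fun i _ => one_sub_mul_le_mul_exp hp (q i)
    _ = (1 - p) ^ r * exp (p / (1 - p) * ∑ i ∈ Icc 1 r, (1 - q i)) := by
        rw [prod_mul_distrib, prod_const, Nat.card_Icc, Nat.add_sub_cancel, ← exp_sum, mul_sum]
        congr 2
        exact sum_congr rfl fun i _ => by ring

lemma sum_Icc_one_sub_le_tsum (hq1 : ∀ i, q i ≤ 1) (hsum : Summable fun i => 1 - q (i + 1))
    (r : ℕ) : ∑ i ∈ Icc 1 r, (1 - q i) ≤ ∑' i, (1 - q (i + 1)) := by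
  rw [← Ico_add_one_right_eq_Icc, sum_Ico_eq_sum_range, Nat.add_sub_cancel]
  simp_rw [add_comm 1]
  exact hsum.sum_le_tsum _ fun i _ => sub_nonneg.2 (hq1 (i + 1))

end ProductBounds

lemma exp_le_zpow_neg {a x : ℝ} {n : ℕ} (ha0 : 0 < a) (ha1 : a < 1) (h : x / |log a| ≤ n) :
    exp x ≤ a ^ (-(n : ℤ)) := by
  have hlog : log a < 0 := log_neg ha0 ha1
  rw [abs_of_neg hlog, div_le_iff₀ (neg_pos.2 hlog)] at h
  rw [zpow_neg, zpow_natCast, ← exp_log (pow_pos ha0 n), ← exp_neg, log_pow]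
  exact exp_le_exp.2 (by linarith)

/-- Truncated subtraction in the exponent: for `r < k` the right side is `a ^ 0 = 1`. -/
lemma le_pow_tsub_of_le_zpow_sub {a x : ℝ} {r k : ℕ} (h : x ≤ a ^ ((r : ℤ) - k)) (h1 : x ≤ 1) :
    x ≤ a ^ (r - k) := by
  rcases le_or_gt k r with hkr | hrk
  · rwa [← Nat.cast_sub hkr, zpow_natCast] at h
  · rwa [Nat.sub_eq_zero_of_le hrk.le, pow_zero]

theorem stmt1_general (q : ℕ → ℝ) (hq0 : ∀ i, 0 ≤ q i) (hq1 : ∀ i, q i ≤ 1)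
    (hsum : Summable fun i : ℕ => 1 - q (i + 1))
    (m : ℝ) (hm : m = ∑' i : ℕ, (1 - q (i + 1)))
    (p : ℝ) (hp : p ∈ Set.Ioo (0 : ℝ) 1)
    (rp : ℕ) (hrp : rp = ⌈p * m / ((1 - p) * |Real.log (1 - p)|)⌉₊) :
    ∀ r : ℕ,
      (1 - p) ^ r ≤ ∏ i ∈ Finset.Icc 1 r, (1 - p * q i) ∧
      (∏ i ∈ Finset.Icc 1 r, (1 - p * q i)) ≤ (1 - p) ^ r * Real.exp (p * m / (1 - p)) ∧
      (1 - p) ^ r * Real.exp (p * m / (1 - p)) ≤ (1 - p) ^ ((r : ℤ) - (rp : ℤ)) ∧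
      (∏ i ∈ Finset.Icc 1 r, (1 - p * q i)) ≤ (1 - p) ^ (r - rp) := by
  intro r
  obtain ⟨hp0, hp1⟩ := hp
  have h1p : 0 < 1 - p := sub_pos.2 hp1
  have hfac : ∀ i, 0 ≤ 1 - p * q i := fun i => by nlinarith [hq0 i, hq1 i]
  have upper : ∏ i ∈ Icc 1 r, (1 - p * q i) ≤ (1 - p) ^ r * exp (p * m / (1 - p)) := by
    refine (prod_Icc_one_sub_mul_le hp1 hfac r).trans ?_
    rw [mul_div_right_comm, hm]
    gcongr
    exact sum_Icc_one_sub_le_tsum hq1 hsum r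
  have hexp : exp (p * m / (1 - p)) ≤ (1 - p) ^ (-(rp : ℤ)) :=
    exp_le_zpow_neg h1p (by linarith) (by rw [hrp, div_div]; exact Nat.le_ceil _)
  have middle : (1 - p) ^ r * exp (p * m / (1 - p)) ≤ (1 - p) ^ ((r : ℤ) - rp) := by
    calc (1 - p) ^ r * exp (p * m / (1 - p)) ≤ (1 - p) ^ r * (1 - p) ^ (-(rp : ℤ)) := by gcongr
      _ = (1 - p) ^ ((r : ℤ) - rp) := by
        rw [← zpow_natCast, ← zpow_add₀ h1p.ne', ← sub_eq_add_neg]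
  refine ⟨pow_le_prod_Icc_one_sub_mul hp0.le hp1.le hq1 r, upper, middle, ?_⟩
  exact le_pow_tsub_of_le_zpow_sub (upper.trans middle)
    (prod_le_one (fun i _ => hfac i) fun i _ => by nlinarith [hq0 i])

/-- With `q i = P(ξ₁ ≤ i)` and `P(R_p > r) = ∏_{i=1}^r (1 − p·q i)`,
assuming `m = E[ξ₁ − 1] = ∑_{i≥1}(1 − q i) < ∞` and setting
`r_p = ⌈p·m/((1−p)·|log(1−p)|)⌉`, one has for all `r ≥ 0` the chain
`(1−p)^r ≤ P(R_p > r) ≤ (1−p)^r·exp(p·m/(1−p)) ≤ (1−p)^{r−r_p}`; in particular a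
`Geometric(1−p)` variable `G` (with `P(G > r) = (1−p)^r`) satisfies `G ≼ R_p ≼ G + r_p`
in the stochastic order, the last domination being `P(R_p > r) ≤ (1−p)^{(r−r_p)⁺}`. -/
theorem stmt1 (q : ℕ → ℝ) (hq0 : ∀ i, 0 ≤ q i) (hq1 : ∀ i, q i ≤ 1)
    (hqmono : Monotone q) (hqlim : Filter.Tendsto q Filter.atTop (nhds 1))
    (hsum : Summable fun i : ℕ => 1 - q (i + 1))
    (m : ℝ) (hm : m = ∑' i : ℕ, (1 - q (i + 1)))
    (p : ℝ) (hp : p ∈ Set.Ioo (0 : ℝ) 1)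
    (rp : ℕ) (hrp : rp = ⌈p * m / ((1 - p) * |Real.log (1 - p)|)⌉₊) :
    ∀ r : ℕ,
      (1 - p) ^ r ≤ ∏ i ∈ Finset.Icc 1 r, (1 - p * q i) ∧
      (∏ i ∈ Finset.Icc 1 r, (1 - p * q i)) ≤ (1 - p) ^ r * Real.exp (p * m / (1 - p)) ∧
      (1 - p) ^ r * Real.exp (p * m / (1 - p)) ≤ (1 - p) ^ ((r : ℤ) - (rp : ℤ)) ∧
      (∏ i ∈ Finset.Icc 1 r, (1 - p * q i)) ≤ (1 - p) ^ (r - rp) :=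
  stmt1_general q hq0 hq1 hsum m hm p hp rp hrp
end

section
/- Assume E[ξ_1] < ∞. Then for every p ∈ (0,1), E[R_p] = ∑_{r=0}^{∞} ∏_{i=1}^{r}(1 − p·q_i) is finite, the map p ↦ (1−p)·E[R_p] is strictly decreasing on (0,1), and there exists a unique p_c ∈ (0,1) such that (1 − p_c)·E[R_{p_c}] = 1; moreover (1−p)·E[R_p] < 1 for all p ∈ (p_c, 1) and (1−p)·E[R_p] > 1 for all p ∈ (0, p_c). -/
/-!
Each survival probability `∏_{i ≤ r} (1 - p q_i)` is nonincreasing in `p`, and the series is at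
least `1`, so `(1 - p) E[R_p]` is strictly decreasing. Since `q_i ≥ 1/2` for `i > N`, the terms
are dominated by `(1 - p/2)^(r - N)`; this gives convergence, continuity in `p` by dominated
convergence, and the bound `E[R_p] ≤ N + 2/p`, which makes `(1 - p) E[R_p] < 1` for `p` close
to `1`. At `p = 1/4` the first two terms already give `(1 - p) E[R_p] > 1`, and the intermediate
value theorem produces the unique crossing point `p_c`.
-/

open Filter Finset

/-- `P(R_p > r)`; thus `E[R_p] = ∑' r, renewalTail q p r`. -/
def renewalTail (q : ℕ → ℝ) (p : ℝ) (r : ℕ) : ℝ := ∏ i ∈ Icc 1 r, (1 - p * q i)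

namespace renewalTail

variable {q : ℕ → ℝ} {p : ℝ}

@[simp] lemma zero : renewalTail q p 0 = 1 := by simp [renewalTail]

lemma succ (r : ℕ) : renewalTail q p (r + 1) = renewalTail q p r * (1 - p * q (r + 1)) :=
  prod_Icc_succ_top (by omega) _

lemma nonneg (hq0 : ∀ i, 0 ≤ q i) (hq1 : ∀ i, q i ≤ 1) (hp1 : p ≤ 1) (r : ℕ) :
    0 ≤ renewalTail q p r :=
  prod_nonneg fun i _ => sub_nonneg.2 (mul_le_one₀ hp1 (hq0 i) (hq1 i))

lemma le_one (hq0 : ∀ i, 0 ≤ q i) (hq1 : ∀ i, q i ≤ 1) (hp0 : 0 ≤ p) (hp1 : p ≤ 1) (r : ℕ) :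
    renewalTail q p r ≤ 1 :=
  prod_le_one (fun i _ => sub_nonneg.2 (mul_le_one₀ hp1 (hq0 i) (hq1 i)))
    fun i _ => sub_le_self _ (mul_nonneg hp0 (hq0 i))

lemma le_of_param_le (hq0 : ∀ i, 0 ≤ q i) (hq1 : ∀ i, q i ≤ 1) {p' : ℝ} (hpp' : p ≤ p')
    (hp'1 : p' ≤ 1) (r : ℕ) : renewalTail q p' r ≤ renewalTail q p r :=
  prod_le_prod (fun i _ => sub_nonneg.2 (mul_le_one₀ hp'1 (hq0 i) (hq1 i)))
    fun i _ => sub_le_sub_left (mul_le_mul_of_nonneg_right hpp' (hq0 i)) 1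

lemma le_pow_sub (hq0 : ∀ i, 0 ≤ q i) (hq1 : ∀ i, q i ≤ 1) (hp0 : 0 ≤ p) (hp1 : p ≤ 1)
    {c : ℝ} {N : ℕ} (hc : ∀ i, N < i → 1 - p * q i ≤ c) (r : ℕ) :
    renewalTail q p r ≤ c ^ (r - N) := by
  induction r with
  | zero => simp
  | succ r ih =>
    rcases lt_or_ge r N with hrN | hNr
    · rw [Nat.sub_eq_zero_of_le hrN, pow_zero]
      exact le_one hq0 hq1 hp0 hp1 _
    · have hfac : 0 ≤ 1 - p * q (r + 1) := sub_nonneg.2 (mul_le_one₀ hp1 (hq0 _) (hq1 _))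
      rw [succ, Nat.sub_add_comm hNr, pow_succ]
      exact mul_le_mul ih (hc _ (by omega)) hfac ((nonneg hq0 hq1 hp1 r).trans ih)

end renewalTail

lemma hasSum_pow_sub {c : ℝ} (hc0 : 0 ≤ c) (hc1 : c < 1) (N : ℕ) :
    HasSum (fun r : ℕ => c ^ (r - N)) (N + (1 - c)⁻¹) := by
  rw [← hasSum_nat_add_iff' N]
  have hhead : ∑ i ∈ range N, c ^ (i - N) = N := by
    rw [sum_congr rfl fun i hi => by rw [Nat.sub_eq_zero_of_le (mem_range.1 hi).le, pow_zero]]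
    simp
  simpa [hhead] using hasSum_geometric_of_lt_one hc0 hc1

variable {q : ℕ → ℝ} {p : ℝ}

lemma renewalTail_le_geometric (hq0 : ∀ i, 0 ≤ q i) (hq1 : ∀ i, q i ≤ 1) (hp0 : 0 ≤ p)
    (hp1 : p ≤ 1) {N : ℕ} (hN : ∀ i, N < i → 1 / 2 ≤ q i) (r : ℕ) :
    renewalTail q p r ≤ (1 - p / 2) ^ (r - N) :=
  renewalTail.le_pow_sub hq0 hq1 hp0 hp1 (fun i hi => by nlinarith [hN i hi]) r

lemma hasSum_one_sub_half_pow_sub (hp0 : 0 < p) (hp1 : p ≤ 1) (N : ℕ) :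
    HasSum (fun r : ℕ => (1 - p / 2) ^ (r - N)) (N + 2 / p) := by
  have h := hasSum_pow_sub (c := 1 - p / 2) (by linarith) (by linarith) N
  rwa [sub_sub_cancel, inv_div] at h

lemma summable_renewalTail_of_half_le (hq0 : ∀ i, 0 ≤ q i) (hq1 : ∀ i, q i ≤ 1) (hp0 : 0 < p)
    (hp1 : p ≤ 1) {N : ℕ} (hN : ∀ i, N < i → 1 / 2 ≤ q i) : Summable (renewalTail q p) :=
  (hasSum_one_sub_half_pow_sub hp0 hp1 N).summable.of_nonneg_of_le
    (renewalTail.nonneg hq0 hq1 hp1) (renewalTail_le_geometric hq0 hq1 hp0.le hp1 hN)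

lemma tsum_renewalTail_le (hq0 : ∀ i, 0 ≤ q i) (hq1 : ∀ i, q i ≤ 1) (hp0 : 0 < p)
    (hp1 : p ≤ 1) {N : ℕ} (hN : ∀ i, N < i → 1 / 2 ≤ q i) :
    ∑' r, renewalTail q p r ≤ N + 2 / p :=
  ((summable_renewalTail_of_half_le hq0 hq1 hp0 hp1 hN).tsum_le_tsum
    (renewalTail_le_geometric hq0 hq1 hp0.le hp1 hN)
    (hasSum_one_sub_half_pow_sub hp0 hp1 N).summable).trans_eq
    (hasSum_one_sub_half_pow_sub hp0 hp1 N).tsum_eq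

lemma exists_half_le_of_tendsto (hqlim : Tendsto q atTop (nhds 1)) :
    ∃ N : ℕ, ∀ i, N < i → 1 / 2 ≤ q i := by
  obtain ⟨N, hN⟩ := eventually_atTop.1 (hqlim.eventually (eventually_ge_nhds (by norm_num : (1 : ℝ) / 2 < 1)))
  exact ⟨N, fun i hi => hN i hi.le⟩

lemma summable_renewalTail (hq0 : ∀ i, 0 ≤ q i) (hq1 : ∀ i, q i ≤ 1)
    (hqlim : Tendsto q atTop (nhds 1)) (hp0 : 0 < p) (hp1 : p ≤ 1) :
    Summable (renewalTail q p) :=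
  have ⟨_, hN⟩ := exists_half_le_of_tendsto hqlim
  summable_renewalTail_of_half_le hq0 hq1 hp0 hp1 hN

lemma two_sub_le_tsum_renewalTail (hq0 : ∀ i, 0 ≤ q i) (hq1 : ∀ i, q i ≤ 1) (hp0 : 0 ≤ p)
    (hp1 : p ≤ 1) (hs : Summable (renewalTail q p)) : 2 - p ≤ ∑' r, renewalTail q p r := by
  have hfirst : ∑ r ∈ range 2, renewalTail q p r = 2 - p * q 1 := by
    simp [sum_range_succ, renewalTail.succ]
    ring
  have hle := hs.sum_le_tsum (range 2) fun r _ => renewalTail.nonneg hq0 hq1 hp1 r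
  nlinarith [hq1 1]

lemma exists_one_sub_mul_tsum_renewalTail_lt_one (hq0 : ∀ i, 0 ≤ q i) (hq1 : ∀ i, q i ≤ 1)
    (hqlim : Tendsto q atTop (nhds 1)) :
    ∃ b, 1 / 2 ≤ b ∧ b < 1 ∧ (1 - b) * ∑' r, renewalTail q b r < 1 := by
  obtain ⟨N, hN⟩ := exists_half_le_of_tendsto hqlim
  have hN4 : (0 : ℝ) < N + 4 := by positivity
  set b : ℝ := 1 - 1 / (2 * (N + 4)) with hb
  have hb2 : 1 / 2 ≤ b := by
    have : 1 / (2 * ((N : ℝ) + 4)) ≤ 1 / 2 := one_div_le_one_div_of_le (by norm_num) (by linarith)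
    linarith
  have hb1 : b < 1 := by rw [hb]; linarith [show 0 < 1 / (2 * ((N : ℝ) + 4)) by positivity]
  have hbound : ∑' r, renewalTail q b r ≤ N + 4 :=
    (tsum_renewalTail_le hq0 hq1 (by linarith) hb1.le hN).trans
      (by gcongr; rw [div_le_iff₀ (by linarith)]; linarith)
  refine ⟨b, hb2, hb1, ?_⟩
  calc (1 - b) * ∑' r, renewalTail q b r ≤ (1 - b) * (N + 4) :=
        mul_le_mul_of_nonneg_left hbound (by linarith)
    _ = 1 / 2 := by rw [hb]; field_simp; ring
    _ < 1 := by norm_num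

lemma continuousOn_tsum_renewalTail (hq0 : ∀ i, 0 ≤ q i) (hq1 : ∀ i, q i ≤ 1)
    (hqlim : Tendsto q atTop (nhds 1)) {a b : ℝ} (ha : 0 < a) (hab : a ≤ b) (hb : b ≤ 1) :
    ContinuousOn (fun p => ∑' r, renewalTail q p r) (Set.Icc a b) := by
  refine continuousOn_tsum (u := renewalTail q a) (fun r => ?_)
    (summable_renewalTail hq0 hq1 hqlim ha (hab.trans hb)) fun r p hp => ?_
  · unfold renewalTail
    fun_prop
  · rw [Real.norm_of_nonneg (renewalTail.nonneg hq0 hq1 (hp.2.trans hb) r)]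
    exact renewalTail.le_of_param_le hq0 hq1 hp.1 (hp.2.trans hb) r

lemma strictAntiOn_one_sub_mul_tsum_renewalTail (hq0 : ∀ i, 0 ≤ q i) (hq1 : ∀ i, q i ≤ 1)
    (hqlim : Tendsto q atTop (nhds 1)) :
    StrictAntiOn (fun p => (1 - p) * ∑' r, renewalTail q p r) (Set.Ioo 0 1) := by
  intro p ⟨hp0, hp1⟩ p' ⟨hp'0, hp'1⟩ hpp'
  have hs := summable_renewalTail hq0 hq1 hqlim hp0 hp1.le
  have hs' := summable_renewalTail hq0 hq1 hqlim hp'0 hp'1.le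
  have hmono : ∑' r, renewalTail q p' r ≤ ∑' r, renewalTail q p r :=
    hs'.tsum_le_tsum (renewalTail.le_of_param_le hq0 hq1 hpp'.le hp'1.le) hs
  have hpos : 0 < ∑' r, renewalTail q p' r := by
    linarith [two_sub_le_tsum_renewalTail hq0 hq1 hp'0.le hp'1.le hs']
  calc (1 - p') * ∑' r, renewalTail q p' r < (1 - p) * ∑' r, renewalTail q p' r := by
        gcongr
    _ ≤ (1 - p) * ∑' r, renewalTail q p r := mul_le_mul_of_nonneg_left hmono (by linarith)

lemma StrictAntiOn.exists_unique_eq_of_continuousOn {f : ℝ → ℝ} {l u a b y : ℝ}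
    (hf : StrictAntiOn f (Set.Ioo l u)) (hla : l < a) (hab : a ≤ b) (hbu : b < u)
    (hcont : ContinuousOn f (Set.Icc a b)) (hfb : f b < y) (hfa : y < f a) :
    ∃ c ∈ Set.Ioo l u, f c = y ∧ (∀ p ∈ Set.Ioo l u, f p = y → p = c) ∧
      (∀ p, c < p → p < u → f p < y) ∧ (∀ p, l < p → p < c → y < f p) := by
  obtain ⟨c, hc, hfc⟩ := intermediate_value_Icc' hab hcont ⟨hfb.le, hfa.le⟩
  have hcmem : c ∈ Set.Ioo l u := ⟨hla.trans_le hc.1, hc.2.trans_lt hbu⟩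
  refine ⟨c, hcmem, hfc, fun p hp hfp => hf.injOn hp hcmem (hfp.trans hfc.symm), ?_, ?_⟩
  · intro p hcp hpu
    exact hfc ▸ hf hcmem ⟨hcmem.1.trans hcp, hpu⟩ hcp
  · intro p hlp hpc
    exact hfc ▸ hf ⟨hlp, hpc.trans hcmem.2⟩ hcmem hpc

theorem stmt3_general (q : ℕ → ℝ) (hq0 : ∀ i, 0 ≤ q i) (hq1 : ∀ i, q i ≤ 1)
    (hqlim : Filter.Tendsto q Filter.atTop (nhds 1))
    (ER : ℝ → ℝ)
    (hER : ER = fun p => ∑' r : ℕ, ∏ i ∈ Finset.Icc 1 r, (1 - p * q i)) :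
    (∀ p ∈ Set.Ioo (0 : ℝ) 1, Summable fun r : ℕ => ∏ i ∈ Finset.Icc 1 r, (1 - p * q i)) ∧
    StrictAntiOn (fun p => (1 - p) * ER p) (Set.Ioo (0 : ℝ) 1) ∧
    (∃ pc : ℝ, pc ∈ Set.Ioo (0 : ℝ) 1 ∧ (1 - pc) * ER pc = 1 ∧
      (∀ p ∈ Set.Ioo (0 : ℝ) 1, (1 - p) * ER p = 1 → p = pc) ∧
      (∀ p : ℝ, pc < p → p < 1 → (1 - p) * ER p < 1) ∧
      (∀ p : ℝ, 0 < p → p < pc → 1 < (1 - p) * ER p)) := by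
  subst hER
  have hanti := strictAntiOn_one_sub_mul_tsum_renewalTail hq0 hq1 hqlim
  obtain ⟨b, hb2, hb1, hfb⟩ := exists_one_sub_mul_tsum_renewalTail_lt_one hq0 hq1 hqlim
  have hfa : 1 < (1 - 1 / 4 : ℝ) * ∑' r, renewalTail q (1 / 4) r := by
    have := two_sub_le_tsum_renewalTail hq0 hq1 (p := 1 / 4) (by norm_num) (by norm_num)
      (summable_renewalTail hq0 hq1 hqlim (by norm_num) (by norm_num))
    linarith
  have hcont : ContinuousOn (fun p => (1 - p) * ∑' r, renewalTail q p r) (Set.Icc (1 / 4) b) :=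
    (continuous_const.sub continuous_id).continuousOn.mul
      (continuousOn_tsum_renewalTail hq0 hq1 hqlim (by norm_num) (by linarith) hb1.le)
  exact ⟨fun p hp => summable_renewalTail hq0 hq1 hqlim hp.1 hp.2.le, hanti,
    hanti.exists_unique_eq_of_continuousOn (by norm_num) (by linarith) hb1 hcont hfb hfa⟩

/-- Assume `E[ξ₁] < ∞` (i.e. `∑_{i≥1}(1 − q i) < ∞`). Then for every
`p ∈ (0,1)` the series `E[R_p] = ∑_{r≥0} ∏_{i=1}^r (1 − p·q i)` converges, the map
`p ↦ (1−p)·E[R_p]` is strictly decreasing on `(0,1)`, and there is a unique `p_c ∈ (0,1)`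
with `(1−p_c)·E[R_{p_c}] = 1`; moreover `(1−p)·E[R_p] < 1` on `(p_c, 1)` and
`(1−p)·E[R_p] > 1` on `(0, p_c)`. -/
theorem stmt3 (q : ℕ → ℝ) (hq0 : ∀ i, 0 ≤ q i) (hq1 : ∀ i, q i ≤ 1)
    (hqmono : Monotone q) (hqlim : Filter.Tendsto q Filter.atTop (nhds 1))
    (hsum : Summable fun i : ℕ => 1 - q (i + 1))
    (ER : ℝ → ℝ)
    (hER : ER = fun p => ∑' r : ℕ, ∏ i ∈ Finset.Icc 1 r, (1 - p * q i)) :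
    (∀ p ∈ Set.Ioo (0 : ℝ) 1, Summable fun r : ℕ => ∏ i ∈ Finset.Icc 1 r, (1 - p * q i)) ∧
    StrictAntiOn (fun p => (1 - p) * ER p) (Set.Ioo (0 : ℝ) 1) ∧
    (∃ pc : ℝ, pc ∈ Set.Ioo (0 : ℝ) 1 ∧ (1 - pc) * ER pc = 1 ∧
      (∀ p ∈ Set.Ioo (0 : ℝ) 1, (1 - p) * ER p = 1 → p = pc) ∧
      (∀ p : ℝ, pc < p → p < 1 → (1 - p) * ER p < 1) ∧
      (∀ p : ℝ, 0 < p → p < pc → 1 < (1 - p) * ER p)) :=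
  stmt3_general q hq0 hq1 hqlim ER hER
end

section
/- For every p ∈ (0,1), with θ_i(p) := (1−p)·q_i / (1 − p·q_i) ∈ [0,1], one has E[ ∑_{i=1}^{R_p − 1} θ_i(p) ] = (1−p)/p; equivalently, ∑_{r=1}^{∞} ( ∑_{i=1}^{r−1} θ_i(p) ) · p·q_r · ∏_{i=1}^{r−1}(1 − p·q_i) = (1−p)/p. -/
/-!
Write `c r = ∏_{i ≤ r} (1 - p q_i) = P(R_p > r)` and `T r = ∑_{i ≤ r} θ_i`. Since
`θ_{r+1} c_{r+1} = (1 - p) q_{r+1} c_r = (1 - p)/p · (c_r - c_{r+1})`, Abel summation turns the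
`N`-th partial sum `∑_{r<N} T_r (c_r - c_{r+1})` into `(1 - p)/p · (1 - c_N) - T_N c_N`.
As `c_{r+1} / c_r = 1 - p q_{r+1} → 1 - p < 1`, the ratio test gives `N c_N → 0`, and since
`0 ≤ T_N ≤ N` both correction terms vanish in the limit.
-/

open Filter Topology Finset

theorem tendsto_natCast_mul_zero_of_ratio_tendsto_lt_one {f : ℕ → ℝ} (hf : ∀ n, 0 < f n)
    {l : ℝ} (hl : l < 1) (h : Tendsto (fun n ↦ f (n + 1) / f n) atTop (𝓝 l)) :
    Tendsto (fun n : ℕ ↦ (n : ℝ) * f n) atTop (𝓝 0) := by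
  refine Summable.tendsto_atTop_zero (summable_of_ratio_test_tendsto_lt_one hl ?_ ?_)
  · filter_upwards [eventually_ne_atTop 0] with n hn
    exact mul_ne_zero (Nat.cast_ne_zero.mpr hn) (hf n).ne'
  · have hfac : Tendsto (fun n : ℕ ↦ (1 + 1 / (n : ℝ)) * (f (n + 1) / f n)) atTop
        (𝓝 ((1 + 0) * l)) :=
      (tendsto_const_nhds.add tendsto_one_div_atTop_nhds_zero_nat).mul h
    rw [add_zero, one_mul] at hfac
    refine hfac.congr' ?_
    filter_upwards [eventually_ne_atTop 0] with n hn
    have hn' : (n : ℝ) ≠ 0 := Nat.cast_ne_zero.mpr hn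
    rw [Real.norm_of_nonneg (mul_nonneg n.succ.cast_nonneg (hf _).le),
      Real.norm_of_nonneg (mul_nonneg n.cast_nonneg (hf _).le)]
    push_cast
    field_simp [(hf n).ne']

theorem sum_range_mul_sub_of_increment_mul {T c : ℕ → ℝ} {κ : ℝ}
    (h : ∀ r, (T (r + 1) - T r) * c (r + 1) = κ * (c r - c (r + 1))) (N : ℕ) :
    ∑ r ∈ range N, T r * (c r - c (r + 1)) = κ * (c 0 - c N) - (T N * c N - T 0 * c 0) := by
  induction N with
  | zero => simp
  | succ N ih =>
    rw [sum_range_succ, ih]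
    linear_combination h N

theorem one_sub_mul_pos_of_lt_one {p x : ℝ} (hp : p < 1) (hx0 : 0 ≤ x) (hx1 : x ≤ 1) :
    0 < 1 - p * x := by
  rcases le_total 0 p with h | h <;> nlinarith

theorem one_sub_mul_div_one_sub_mul_mem_Icc {p x : ℝ} (hp : p < 1) (hx0 : 0 ≤ x) (hx1 : x ≤ 1) :
    (1 - p) * x / (1 - p * x) ∈ Set.Icc (0 : ℝ) 1 := by
  have hden := one_sub_mul_pos_of_lt_one hp hx0 hx1
  exact ⟨div_nonneg (mul_nonneg (by linarith) hx0) hden.le,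
    (div_le_one hden).mpr (by nlinarith)⟩

/-- `survival p q r = P(R_p > r)`. -/
def survival (p : ℝ) (q : ℕ → ℝ) (r : ℕ) : ℝ :=
  ∏ i ∈ Icc 1 r, (1 - p * q i)

noncomputable def thetaSum (p : ℝ) (q : ℕ → ℝ) (r : ℕ) : ℝ :=
  ∑ i ∈ Icc 1 r, (1 - p) * q i / (1 - p * q i)

section Survival

variable {p : ℝ} {q : ℕ → ℝ}

@[simp]
theorem survival_zero : survival p q 0 = 1 := by
  simp [survival]

@[simp]
theorem thetaSum_zero : thetaSum p q 0 = 0 := by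
  simp [thetaSum]

theorem survival_succ (r : ℕ) : survival p q (r + 1) = survival p q r * (1 - p * q (r + 1)) :=
  prod_Icc_succ_top (Nat.le_add_left 1 r) _

variable (hp : p < 1) (hq0 : ∀ i, 0 ≤ q i) (hq1 : ∀ i, q i ≤ 1)
include hp hq0 hq1

theorem survival_pos (r : ℕ) : 0 < survival p q r :=
  prod_pos fun i _ ↦ one_sub_mul_pos_of_lt_one hp (hq0 i) (hq1 i)

theorem thetaSum_mem_Icc (r : ℕ) : thetaSum p q r ∈ Set.Icc (0 : ℝ) r := by
  have hθ i := one_sub_mul_div_one_sub_mul_mem_Icc hp (hq0 i) (hq1 i)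
  refine ⟨sum_nonneg fun i _ ↦ (hθ i).1, ?_⟩
  calc _ ≤ ∑ _i ∈ Icc 1 r, (1 : ℝ) := sum_le_sum fun i _ ↦ (hθ i).2
    _ = r := by simp

theorem tendsto_survival_succ_div (hqlim : Tendsto q atTop (𝓝 1)) :
    Tendsto (fun r ↦ survival p q (r + 1) / survival p q r) atTop (𝓝 (1 - p)) := by
  have hlim : Tendsto (fun r ↦ 1 - p * q (r + 1)) atTop (𝓝 (1 - p * 1)) :=
    tendsto_const_nhds.sub ((hqlim.comp (tendsto_add_atTop_nat 1)).const_mul p)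
  rw [mul_one] at hlim
  refine hlim.congr fun r ↦ ?_
  rw [survival_succ, mul_div_cancel_left₀ _ (survival_pos hp hq0 hq1 r).ne']

theorem tendsto_natCast_mul_survival (hp0 : 0 < p) (hqlim : Tendsto q atTop (𝓝 1)) :
    Tendsto (fun r : ℕ ↦ (r : ℝ) * survival p q r) atTop (𝓝 0) :=
  tendsto_natCast_mul_zero_of_ratio_tendsto_lt_one (survival_pos hp hq0 hq1)
    (by linarith) (tendsto_survival_succ_div hp hq0 hq1 hqlim)

theorem thetaSum_increment_mul_survival (hp0 : p ≠ 0) (r : ℕ) :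
    (thetaSum p q (r + 1) - thetaSum p q r) * survival p q (r + 1) =
      (1 - p) / p * (survival p q r - survival p q (r + 1)) := by
  have hden := one_sub_mul_pos_of_lt_one hp (hq0 (r + 1)) (hq1 (r + 1))
  simp only [thetaSum, sum_Icc_succ_top (Nat.le_add_left 1 r), add_sub_cancel_left, survival_succ]
  field_simp
  ring

theorem sum_range_thetaSum_mul_survival (hp0 : p ≠ 0) (N : ℕ) :
    ∑ r ∈ range N, thetaSum p q r * (p * q (r + 1)) * survival p q r =
      (1 - p) / p * (1 - survival p q N) - thetaSum p q N * survival p q N := by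
  calc _ = ∑ r ∈ range N, thetaSum p q r * (survival p q r - survival p q (r + 1)) := by
        refine sum_congr rfl fun r _ ↦ ?_
        rw [survival_succ]
        ring
    _ = _ := by
        rw [sum_range_mul_sub_of_increment_mul (thetaSum_increment_mul_survival hp hq0 hq1 hp0) N]
        simp

end Survival

theorem stmt4_general (q : ℕ → ℝ) (hq0 : ∀ i, 0 ≤ q i) (hq1 : ∀ i, q i ≤ 1)
    (hqlim : Filter.Tendsto q Filter.atTop (nhds 1))
    (p : ℝ) (hp : p ∈ Set.Ioo (0 : ℝ) 1)
    (θ : ℕ → ℝ) (hθ : θ = fun i => (1 - p) * q i / (1 - p * q i)) :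
    (∀ i : ℕ, θ i ∈ Set.Icc (0 : ℝ) 1) ∧
    ∑' r : ℕ,
        (∑ i ∈ Finset.Icc 1 r, θ i) * (p * q (r + 1)) * ∏ i ∈ Finset.Icc 1 r, (1 - p * q i)
      = (1 - p) / p := by
  obtain ⟨hp0, hp1⟩ := hp
  subst hθ
  refine ⟨fun i ↦ one_sub_mul_div_one_sub_mul_mem_Icc hp1 (hq0 i) (hq1 i), ?_⟩
  have hc_pos := survival_pos hp1 hq0 hq1
  have hT := thetaSum_mem_Icc hp1 hq0 hq1
  have hNc := tendsto_natCast_mul_survival hp1 hq0 hq1 hp0 hqlim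
  have hc : Tendsto (survival p q) atTop (𝓝 0) := by
    refine squeeze_zero' (.of_forall fun N ↦ (hc_pos N).le) ?_ hNc
    filter_upwards [eventually_ge_atTop 1] with N hN
    exact le_mul_of_one_le_left (hc_pos N).le (by exact_mod_cast hN)
  have hTc : Tendsto (fun N ↦ thetaSum p q N * survival p q N) atTop (𝓝 0) :=
    squeeze_zero (fun N ↦ mul_nonneg (hT N).1 (hc_pos N).le)
      (fun N ↦ mul_le_mul_of_nonneg_right (hT N).2 (hc_pos N).le) hNc
  have hpartial : Tendsto
      (fun N ↦ ∑ r ∈ range N, thetaSum p q r * (p * q (r + 1)) * survival p q r)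
      atTop (𝓝 ((1 - p) / p)) := by
    simp_rw [sum_range_thetaSum_mul_survival hp1 hq0 hq1 hp0.ne']
    simpa using ((tendsto_const_nhds (x := (1 : ℝ)) |>.sub hc).const_mul ((1 - p) / p)).sub hTc
  refine ((hasSum_iff_tendsto_nat_of_nonneg (fun r ↦ ?_) _).2 hpartial).tsum_eq
  exact mul_nonneg (mul_nonneg (hT r).1 (mul_nonneg hp0.le (hq0 _))) (hc_pos r).le

/-- With `θ i = (1−p)·q i/(1 − p·q i) ∈ [0,1]` and
`P(R_p = r) = p·q r·∏_{i=1}^{r-1}(1 − p·q i)`, one has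
`E[∑_{i=1}^{R_p − 1} θ i] = (1−p)/p`, i.e.
`∑_{r≥1} (∑_{i=1}^{r−1} θ i)·p·q r·∏_{i=1}^{r−1}(1 − p·q i) = (1−p)/p`. -/
theorem stmt4 (q : ℕ → ℝ) (hq0 : ∀ i, 0 ≤ q i) (hq1 : ∀ i, q i ≤ 1)
    (hqmono : Monotone q) (hqlim : Filter.Tendsto q Filter.atTop (nhds 1))
    (p : ℝ) (hp : p ∈ Set.Ioo (0 : ℝ) 1)
    (θ : ℕ → ℝ) (hθ : θ = fun i => (1 - p) * q i / (1 - p * q i)) :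
    (∀ i : ℕ, θ i ∈ Set.Icc (0 : ℝ) 1) ∧
    ∑' r : ℕ,
        (∑ i ∈ Finset.Icc 1 r, θ i) * (p * q (r + 1)) * ∏ i ∈ Finset.Icc 1 r, (1 - p * q i)
      = (1 - p) / p :=
  stmt4_general q hq0 hq1 hqlim p hp θ hθ
end

section
/- For every r ≥ 1 with P(R_p = r) > 0, the conditional distribution of J_p given {R_p = r} is equal to the distribution of ∑_{i=1}^{r−1} B_i, where B_1, ..., B_{r−1} are independent Bernoulli random variables with P(B_i = 1) = (1−p)/(1 − p·q_i). In particular, J_p ≤ R_p − 1 almost surely. -/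
/-!
On `{R = r}` the zero set `S = {i < r : ω i = 0}` pins down one cell of the product space:
`ω r = 1`, `ξ r ≤ r`, `ω i = 0` for `i ∈ S`, and `ω i = 1`, `ξ i > i` for the other `i < r`.
By independence the cell has probability `p q_r ∏_{i ∈ S} aᵢ ∏_{i ∉ S} bᵢ` with `aᵢ = 1 - p` and
`bᵢ = p (1 - q_i)`. Summing over `S` gives `P(R = r) = p q_r ∏ (aᵢ + bᵢ)`, so given `R = r` the
events `i ∈ S` are independent with probabilities `aᵢ / (aᵢ + bᵢ) = (1 - p) / (1 - p q_i)`.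
-/

open MeasureTheory ProbabilityTheory Finset

theorem Nat.sInf_eq_iff_isLeast {s : Set ℕ} {r : ℕ} (hr : r ≠ 0) : sInf s = r ↔ IsLeast s r := by
  refine ⟨fun h => ?_, IsLeast.csInf_eq⟩
  have hs : s.Nonempty :=
    Set.nonempty_iff_ne_empty.2 fun he => hr (by rw [← h, he, Nat.sInf_empty])
  exact h ▸ ⟨Nat.sInf_mem hs, fun _ => Nat.sInf_le⟩

theorem Nat.isLeast_setOf_one_le_and_iff {succ : ℕ → Prop} {r : ℕ} (hr : 1 ≤ r) :
    IsLeast {n | 1 ≤ n ∧ succ n} r ↔ succ r ∧ ∀ i ∈ Ico 1 r, ¬ succ i := by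
  simp only [IsLeast, lowerBounds, Set.mem_ofPred_eq, mem_Ico, hr, true_and, and_imp]
  refine and_congr_right fun _ => ⟨fun h i hi hir hs => ?_, fun h i hi hs => ?_⟩
  · exact absurd (h hi hs) (by omega)
  · exact not_lt.1 fun hir => h i hi hir hs

theorem Finset.filter_eq_iff_of_subset {α : Type*} {s S : Finset α} {P : α → Prop}
    [DecidablePred P] (hS : S ⊆ s) : s.filter P = S ↔ ∀ i ∈ s, (P i ↔ i ∈ S) := by
  refine ⟨fun h i hi => by simp [← h, hi], fun h => ?_⟩
  ext i
  by_cases hi : i ∈ s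
  · simp [hi, h i hi]
  · simp only [mem_filter, hi, false_and, false_iff]
    exact fun h' => hi (hS h')

theorem Finset.prod_mul_prod_sdiff_eq_mul_prod_add {ι K : Type*} [Field K] [DecidableEq ι]
    {I S : Finset ι} (a b : ι → K) (hS : S ⊆ I) (hab : ∀ i ∈ I, a i + b i ≠ 0) :
    (∏ i ∈ S, a i) * ∏ i ∈ I \ S, b i =
      (∏ i ∈ S, a i / (a i + b i)) * (∏ i ∈ I \ S, (1 - a i / (a i + b i))) *
        ∏ i ∈ I, (a i + b i) := by
  have ha : ∀ i ∈ S, a i = a i / (a i + b i) * (a i + b i) := fun i hi =>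
    (div_mul_cancel₀ _ (hab i (hS hi))).symm
  have hb : ∀ i ∈ I \ S, b i = (1 - a i / (a i + b i)) * (a i + b i) := fun i hi => by
    have := hab i (mem_sdiff.1 hi).1
    field_simp
    ring
  rw [prod_congr rfl ha, prod_congr rfl hb, ← prod_sdiff hS, prod_mul_distrib, prod_mul_distrib]
  ring

theorem Finset.prod_Icc_eq_mul_prod_mul_prod_sdiff {M : Type*} [CommMonoid M] (f : ℕ → M)
    {r : ℕ} (hr : 1 ≤ r) {S : Finset ℕ} (hS : S ⊆ Ico 1 r) :
    ∏ i ∈ Icc 1 r, f i = f r * ((∏ i ∈ S, f i) * ∏ i ∈ Ico 1 r \ S, f i) := by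
  rw [← Ico_insert_right hr, prod_insert (by simp), ← prod_sdiff hS, mul_comm (∏ i ∈ S, f i)]

theorem ProbabilityTheory.iIndepFun.measureReal_inter_preimage_sumElim
    {Ω ι κ β : Type*} [MeasurableSpace Ω] {P : Measure Ω} [MeasurableSpace β]
    {X : ι → Ω → β} {Y : κ → Ω → β} (h : iIndepFun (Sum.elim X Y) P) (s : Finset ι)
    (t : Finset κ) {A : ι → Set β} {B : κ → Set β} (hA : ∀ i ∈ s, MeasurableSet (A i))
    (hB : ∀ j ∈ t, MeasurableSet (B j)) :
    P.real ((⋂ i ∈ s, X i ⁻¹' A i) ∩ ⋂ j ∈ t, Y j ⁻¹' B j) =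
      (∏ i ∈ s, P.real (X i ⁻¹' A i)) * ∏ j ∈ t, P.real (Y j ⁻¹' B j) := by
  have hsets : ∀ u ∈ s.disjSum t, MeasurableSet (Sum.elim A B u) := by
    rintro (i | j) hu
    exacts [hA i (by simpa using hu), hB j (by simpa using hu)]
  have key := h.measure_inter_preimage_eq_mul (s.disjSum t) hsets
  have hinter : (⋂ u ∈ s.disjSum t, Sum.elim X Y u ⁻¹' Sum.elim A B u) =
      (⋂ i ∈ s, X i ⁻¹' A i) ∩ ⋂ j ∈ t, Y j ⁻¹' B j := by
    ext x; simp
  rw [hinter, prod_disjSum] at key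
  simp only [measureReal_def, key, ENNReal.toReal_mul, ENNReal.toReal_prod, Sum.elim_inl,
    Sum.elim_inr]

theorem measureReal_preimage_zero_eq_one_sub {Ω : Type*} [MeasurableSpace Ω] {P : Measure Ω}
    [IsProbabilityMeasure P] {X : Ω → ℕ} (hX : Measurable X) (hX1 : ∀ x, X x ≤ 1) :
    P.real (X ⁻¹' {0}) = 1 - P.real (X ⁻¹' {1}) := by
  have hcompl : X ⁻¹' {0} = (X ⁻¹' {1})ᶜ := by
    ext x
    have := hX1 x
    simp only [Set.mem_preimage, Set.mem_singleton_iff, Set.mem_compl_iff]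
    omega
  rw [hcompl, probReal_compl_eq_one_sub (hX (measurableSet_singleton 1))]

theorem measureReal_inter_preimage_finset {Ω α : Type*} [MeasurableSpace Ω] {μ : Measure Ω}
    [IsFiniteMeasure μ] {A : Set Ω} {Z : Ω → α} (𝒮 : Finset α)
    (h : ∀ a ∈ 𝒮, NullMeasurableSet (A ∩ Z ⁻¹' {a}) μ) :
    μ.real (A ∩ Z ⁻¹' 𝒮) = ∑ a ∈ 𝒮, μ.real (A ∩ Z ⁻¹' {a}) := by
  have hunion : A ∩ Z ⁻¹' 𝒮 = ⋃ a ∈ 𝒮, A ∩ Z ⁻¹' {a} := by ext; simp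
  refine hunion ▸ measureReal_biUnion_finset₀ (fun a _ b _ hab => ?_) h
  exact (((Set.disjoint_singleton.2 hab).preimage Z).mono Set.inter_subset_right
    Set.inter_subset_right).aedisjoint

def bernoulliCell (S : Finset ℕ) (i : ℕ) : Set ℕ := if i ∈ S then {0} else {1}

def delayCell (r : ℕ) (S : Finset ℕ) (i : ℕ) : Set ℕ :=
  if i = r then Set.Iic r else if i ∈ S then Set.univ else Set.Ioi i

section

variable {Ω : Type*}

noncomputable def firstRenewal (W ξ : ℕ → Ω → ℕ) (x : Ω) : ℕ :=
  sInf {n | 1 ≤ n ∧ W n x = 1 ∧ ξ n x ≤ n}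

def zerosBefore (W : ℕ → Ω → ℕ) (r : ℕ) (x : Ω) : Finset ℕ := (Ico 1 r).filter fun i => W i x = 0

-- Both families are indexed by all of `Icc 1 r` (with `Set.univ` for an unconstrained coordinate),
-- so that independence turns the probability of the cell into a product over `Icc 1 r`.
def renewalCell (W ξ : ℕ → Ω → ℕ) (r : ℕ) (S : Finset ℕ) : Set Ω :=
  (⋂ i ∈ Icc 1 r, W i ⁻¹' bernoulliCell S i) ∩ ⋂ i ∈ Icc 1 r, ξ i ⁻¹' delayCell r S i

theorem firstRenewal_eq_and_zerosBefore_eq_iff {W ξ : ℕ → Ω → ℕ} {x : Ω}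
    (hW : ∀ i, W i x ≤ 1) {r : ℕ} (hr : 1 ≤ r) {S : Finset ℕ} (hS : S ⊆ Ico 1 r) :
    firstRenewal W ξ x = r ∧ zerosBefore W r x = S ↔ x ∈ renewalCell W ξ r S := by
  have hrS : r ∉ S := fun hrS => by simpa using hS hrS
  rw [firstRenewal, zerosBefore, Nat.sInf_eq_iff_isLeast (by omega),
    Nat.isLeast_setOf_one_le_and_iff hr, filter_eq_iff_of_subset hS, renewalCell,
    Set.mem_inter_iff, Set.mem_iInter₂, Set.mem_iInter₂, ← forall₂_and, ← Ico_insert_right hr,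
    forall_mem_insert, and_assoc, ← forall₂_and]
  simp only [Set.mem_preimage, bernoulliCell, delayCell, if_neg hrS, Set.mem_singleton_iff]
  refine and_congr_right fun _ => forall₂_congr fun i hi => ?_
  have hir : i ≠ r := (mem_Ico.1 hi).2.ne
  have := hW i
  by_cases hiS : i ∈ S <;> simp [hiS, hir] <;> omega

variable [MeasurableSpace Ω]

structure RenewalModel (P : Measure Ω) (p : ℝ) (q : ℕ → ℝ) (W ξ : ℕ → Ω → ℕ) : Prop where
  indep : iIndepFun (Sum.elim W ξ) P
  measurable_W : ∀ i, Measurable (W i)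
  W_le_one : ∀ i x, W i x ≤ 1
  measureReal_W_eq_one : ∀ i, P.real (W i ⁻¹' {1}) = p
  aemeasurable_ξ : ∀ i, AEMeasurable (ξ i) P
  measureReal_ξ_le : ∀ i j, P.real (ξ i ⁻¹' Set.Iic j) = q j

namespace RenewalModel

variable {P : Measure Ω} {p : ℝ} {q : ℕ → ℝ} {W ξ : ℕ → Ω → ℕ}

theorem nullMeasurableSet_renewalCell (h : RenewalModel P p q W ξ) (r : ℕ) (S : Finset ℕ) :
    NullMeasurableSet (renewalCell W ξ r S) P :=
  ((Icc 1 r).nullMeasurableSet_biInter fun i _ =>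
      (h.measurable_W i).nullMeasurable .of_discrete).inter
    ((Icc 1 r).nullMeasurableSet_biInter fun i _ =>
      (h.aemeasurable_ξ i).nullMeasurable .of_discrete)

variable [IsProbabilityMeasure P]

theorem measureReal_renewalCell (h : RenewalModel P p q W ξ) {r : ℕ} (hr : 1 ≤ r)
    {S : Finset ℕ} (hS : S ⊆ Ico 1 r) :
    P.real (renewalCell W ξ r S) =
      p * q r * ((∏ _i ∈ S, (1 - p)) * ∏ i ∈ Ico 1 r \ S, p * (1 - q i)) := by
  have hrS : r ∉ S := fun hrS => by simpa using hS hrS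
  have hW0 : ∀ i, P.real (W i ⁻¹' {0}) = 1 - p := fun i => by
    rw [measureReal_preimage_zero_eq_one_sub (h.measurable_W i) (h.W_le_one i),
      h.measureReal_W_eq_one]
  have hξgt : ∀ i, P.real (ξ i ⁻¹' Set.Ioi i) = 1 - q i := fun i => by
    rw [← Set.compl_Iic, Set.preimage_compl,
      probReal_compl_eq_one_sub₀ ((h.aemeasurable_ξ i).nullMeasurable measurableSet_Iic),
      h.measureReal_ξ_le]
  rw [renewalCell, h.indep.measureReal_inter_preimage_sumElim _ _ (fun _ _ => .of_discrete)
    (fun _ _ => .of_discrete), ← prod_mul_distrib, prod_Icc_eq_mul_prod_mul_prod_sdiff _ hr hS]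
  congr 1
  · simp [bernoulliCell, delayCell, hrS, h.measureReal_W_eq_one, h.measureReal_ξ_le]
  congr 1 <;> refine prod_congr rfl fun i hi => ?_
  · have hir : i ≠ r := (mem_Ico.1 (hS hi)).2.ne
    simp [bernoulliCell, delayCell, hi, hir, hW0]
  · obtain ⟨hiI, hiS⟩ := mem_sdiff.1 hi
    have hir : i ≠ r := (mem_Ico.1 hiI).2.ne
    simp [bernoulliCell, delayCell, hiS, hir, h.measureReal_W_eq_one, hξgt]

theorem measureReal_firstRenewal_eq_and_zerosBefore_mem (h : RenewalModel P p q W ξ) {r : ℕ}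
    (hr : 1 ≤ r) (𝒮 : Finset (Finset ℕ)) (h𝒮 : ∀ S ∈ 𝒮, S ⊆ Ico 1 r) :
    P.real {x | firstRenewal W ξ x = r ∧ zerosBefore W r x ∈ 𝒮} =
      ∑ S ∈ 𝒮, p * q r * ((∏ _i ∈ S, (1 - p)) * ∏ i ∈ Ico 1 r \ S, p * (1 - q i)) := by
  have hfiber : ∀ S ∈ 𝒮,
      firstRenewal W ξ ⁻¹' {r} ∩ zerosBefore W r ⁻¹' {S} = renewalCell W ξ r S := fun S hS =>
    Set.ext fun x => firstRenewal_eq_and_zerosBefore_eq_iff (h.W_le_one · x) hr (h𝒮 S hS)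
  refine (measureReal_inter_preimage_finset (A := firstRenewal W ξ ⁻¹' {r}) 𝒮
    fun S hS => ?_).trans (sum_congr rfl fun S hS => ?_)
  · exact hfiber S hS ▸ h.nullMeasurableSet_renewalCell r S
  · rw [hfiber S hS, h.measureReal_renewalCell hr (h𝒮 S hS)]

theorem measureReal_firstRenewal_eq (h : RenewalModel P p q W ξ) {r : ℕ} (hr : 1 ≤ r) :
    P.real {x | firstRenewal W ξ x = r} = p * q r * ∏ i ∈ Ico 1 r, (1 - p + p * (1 - q i)) := by
  rw [prod_add, mul_sum, ← h.measureReal_firstRenewal_eq_and_zerosBefore_mem hr _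
    fun S => mem_powerset.1]
  simp [zerosBefore, filter_subset]

theorem measureReal_card_zerosBefore_eq_and_firstRenewal_eq (h : RenewalModel P p q W ξ)
    (hp : p < 1) {r : ℕ} (hr : 1 ≤ r) (k : ℕ) :
    P.real {x | #(zerosBefore W (firstRenewal W ξ x) x) = k ∧ firstRenewal W ξ x = r} =
      (∑ S ∈ powersetCard k (Ico 1 r), (∏ i ∈ S, (1 - p) / (1 - p * q i)) *
        ∏ i ∈ Ico 1 r \ S, (1 - (1 - p) / (1 - p * q i))) *
        P.real {x | firstRenewal W ξ x = r} := by
  have hsets : {x | #(zerosBefore W (firstRenewal W ξ x) x) = k ∧ firstRenewal W ξ x = r} =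
      {x | firstRenewal W ξ x = r ∧ zerosBefore W r x ∈ powersetCard k (Ico 1 r)} := by
    ext x
    simp only [Set.mem_ofPred_eq, mem_powersetCard, zerosBefore, filter_subset, true_and]
    exact and_comm.trans (and_congr_right fun hx => by rw [hx])
  have hp0 : 0 ≤ p := h.measureReal_W_eq_one 0 ▸ measureReal_nonneg
  have hsum : ∀ i, 1 - p + p * (1 - q i) = 1 - p * q i := fun i => by ring
  have hpos : ∀ i, 1 - p + p * (1 - q i) ≠ 0 := fun i =>
    (add_pos_of_pos_of_nonneg (by linarith) (mul_nonneg hp0 (by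
      linarith [h.measureReal_ξ_le 0 i ▸ measureReal_le_one (μ := P)]))).ne'
  rw [hsets, h.measureReal_firstRenewal_eq_and_zerosBefore_mem hr _
    fun S hS => (mem_powersetCard.1 hS).1, h.measureReal_firstRenewal_eq hr, sum_mul]
  refine sum_congr rfl fun S hS => ?_
  rw [mul_assoc, prod_mul_prod_sdiff_eq_mul_prod_add (fun _ => 1 - p) (fun i => p * (1 - q i))
    (mem_powersetCard.1 hS).1 fun i _ => hpos i]
  simp only [hsum]
  ring

end RenewalModel

end

theorem stmt5_general
    {Ω : Type*} [MeasurableSpace Ω] (P : MeasureTheory.Measure Ω)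
    [MeasureTheory.IsProbabilityMeasure P]
    (p : ℝ) (hp : p ∈ Set.Ioo (0 : ℝ) 1)
    (ξ W : ℕ → Ω → ℕ) (q : ℕ → ℝ)
    (hWmeas : ∀ i, Measurable (W i))
    (hWval : ∀ i x, W i x ≤ 1)
    (hξid : ∀ i j, ProbabilityTheory.IdentDistrib (ξ i) (ξ j) P P)
    (hWlaw : ∀ i, P {x | W i x = 1} = ENNReal.ofReal p)
    (hq : ∀ j, (P {x | ξ 1 x ≤ j}).toReal = q j)
    (hindep : ProbabilityTheory.iIndepFun (Sum.elim W ξ) P)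
    (R J : Ω → ℕ)
    (hR : R = fun x => sInf {r : ℕ | 1 ≤ r ∧ W r x = 1 ∧ ξ r x ≤ r})
    (hJ : J = fun x => ((Finset.Ico 1 (R x)).filter fun i => W i x = 0).card) :
    (∀ r : ℕ, 1 ≤ r → 0 < P {x | R x = r} → ∀ k : ℕ,
      (P {x | J x = k ∧ R x = r}).toReal =
        (∑ S ∈ Finset.powersetCard k (Finset.Icc 1 (r - 1)),
          (∏ i ∈ S, (1 - p) / (1 - p * q i)) *
            ∏ i ∈ Finset.Icc 1 (r - 1) \ S, (1 - (1 - p) / (1 - p * q i))) *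
          (P {x | R x = r}).toReal) ∧
    (∀ᵐ x ∂P, J x ≤ R x - 1) := by
  have h : RenewalModel P p q W ξ :=
    { indep := hindep
      measurable_W := hWmeas
      W_le_one := hWval
      measureReal_W_eq_one := fun i => by
        rw [measureReal_def]
        exact (congrArg ENNReal.toReal (hWlaw i)).trans (ENNReal.toReal_ofReal hp.1.le)
      aemeasurable_ξ := fun i => (hξid i i).aemeasurable_fst
      measureReal_ξ_le := fun i j => by
        rw [measureReal_def, (hξid i 1).measure_mem_eq .of_discrete]
        exact hq j }
  have hR' : R = firstRenewal W ξ := hR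
  have hJ' : J = fun x => #(zerosBefore W (R x) x) := hJ
  subst hJ' hR'
  refine ⟨fun r hr _ k => ?_, .of_forall fun x => (card_filter_le _ _).trans_eq (Nat.card_Ico _ _)⟩
  have hIcc : Icc 1 (r - 1) = Ico 1 r := by ext; simp; omega
  rw [hIcc, ← measureReal_def, ← measureReal_def]
  exact h.measureReal_card_zerosBefore_eq_and_firstRenewal_eq hp.2 hr k

/-- In the renewal construction (`(ξ i)` i.i.d. with `q i = P(ξ₁ ≤ i)`,
`(W i)` i.i.d. Bernoulli(`p`) encoded in `{0,1} ⊆ ℕ`, jointly independent,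
`R = inf {r ≥ 1 : W r = 1 ∧ ξ r ≤ r}`, `J = #{1 ≤ i < R : W i = 0}`), for every `r ≥ 1` with
`P(R = r) > 0` the conditional law of `J` given `{R = r}` is that of a sum of independent
Bernoulli variables `B₁, …, B_{r−1}` with `P(Bᵢ = 1) = (1−p)/(1 − p·q i)` (expressed through
the Poisson–binomial point probabilities); in particular `J ≤ R − 1` almost surely. -/
theorem stmt5
    {Ω : Type*} [MeasurableSpace Ω] (P : MeasureTheory.Measure Ω)
    [MeasureTheory.IsProbabilityMeasure P]
    (p : ℝ) (hp : p ∈ Set.Ioo (0 : ℝ) 1)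
    (ξ W : ℕ → Ω → ℕ) (q : ℕ → ℝ)
    (hξmeas : ∀ i, Measurable (ξ i)) (hWmeas : ∀ i, Measurable (W i))
    (hξpos : ∀ i x, 1 ≤ ξ i x) (hWval : ∀ i x, W i x ≤ 1)
    (hξid : ∀ i j, ProbabilityTheory.IdentDistrib (ξ i) (ξ j) P P)
    (hWlaw : ∀ i, P {x | W i x = 1} = ENNReal.ofReal p)
    (hq : ∀ j, (P {x | ξ 1 x ≤ j}).toReal = q j)
    (hindep : ProbabilityTheory.iIndepFun (Sum.elim W ξ) P)
    (R J : Ω → ℕ)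
    (hR : R = fun x => sInf {r : ℕ | 1 ≤ r ∧ W r x = 1 ∧ ξ r x ≤ r})
    (hJ : J = fun x => ((Finset.Ico 1 (R x)).filter fun i => W i x = 0).card) :
    (∀ r : ℕ, 1 ≤ r → 0 < P {x | R x = r} → ∀ k : ℕ,
      (P {x | J x = k ∧ R x = r}).toReal =
        (∑ S ∈ Finset.powersetCard k (Finset.Icc 1 (r - 1)),
          (∏ i ∈ S, (1 - p) / (1 - p * q i)) *
            ∏ i ∈ Finset.Icc 1 (r - 1) \ S, (1 - (1 - p) / (1 - p * q i))) *
          (P {x | R x = r}).toReal) ∧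
    (∀ᵐ x ∂P, J x ≤ R x - 1) :=
  stmt5_general P p hp ξ W q hWmeas hWval hξid hWlaw hq hindep R J hR hJ
end

section
/- For every p ∈ (0,1), E[J_p] = (1−p)·E[R_p]; equivalently, E[J_p | R_p] = (1−p)(R_p − 1) + p·∑_{i=1}^{R_p−1} θ_i(p) almost surely, where θ_i(p) := (1−p)·q_i/(1 − p·q_i), and taking expectations yields E[J_p] = (1−p)·E[R_p]. -/
/-!
Put `A j = {W j = 1, ξ j ≤ j}` and `B j = {W j = 0}`. The pairs `(W j, ξ j)` are independent
across `j`, so `R` is the index of the first success in independent trials of success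
probabilities `p q j`, and `J` counts the indices `i < R` lying in `B i ⊆ (A i)ᶜ`. Given `R = r`,
each trial `i < r` is only known to have failed, so it lies in `B i` with probability
`(1 - p) / (1 - p q i) = (1 - p) + p θ i`; summing over `i < r` gives the conditional mean.
For the unconditional mean, `{i < R} ∩ B i = {i - 1 < R} ∩ B i` and the two events are
independent, so `E J = ∑ P(i < R, B i) = (1 - p) ∑ P(n < R) = (1 - p) E R`. Everything is finite
because `P(n < R) = ∏_{j ≤ n} (1 - p q j)` decays geometrically as `q j → 1`.
-/

open MeasureTheory ProbabilityTheory Finset Filter Topology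
open scoped ENNReal

lemma ProbabilityTheory.iIndepFun.curry {Ω ι κ 𝓧 : Type*} [MeasurableSpace Ω] [MeasurableSpace 𝓧]
    {P : Measure Ω} [IsProbabilityMeasure P] {X : ι × κ → Ω → 𝓧}
    (mX : ∀ p, Measurable (X p)) (h : iIndepFun X P) :
    iIndepFun (fun i ω j => X (i, j) ω) P := by
  have := fun p => Measure.isProbabilityMeasure_map (μ := P) (mX p).aemeasurable
  rw [iIndepFun_iff_map_fun_eq_infinitePi_map (fun i => by fun_prop)]
  have hcurry : (fun ω i j => X (i, j) ω) = MeasurableEquiv.curry ι κ 𝓧 ∘ fun ω p => X p ω := rfl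
  rw [hcurry, ← Measure.map_map (by fun_prop) (by fun_prop), h.map_fun_eq_infinitePi_map mX,
    Measure.infinitePi_map_curry fun i j => P.map (X (i, j))]
  congr 1
  funext i
  exact ((h.precomp (Prod.mk_right_injective i)).map_fun_eq_infinitePi_map fun j => mX _).symm

lemma ProbabilityTheory.iIndepFun.pair_of_sumElim {Ω ι β : Type*} [MeasurableSpace Ω]
    [MeasurableSpace β] {P : Measure Ω} [IsProbabilityMeasure P] {X Y : ι → Ω → β}
    (hX : ∀ i, Measurable (X i)) (hY : ∀ i, Measurable (Y i)) (h : iIndepFun (Sum.elim X Y) P) :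
    iIndepFun (fun i ω (b : Bool) => bif b then X i ω else Y i ω) P := by
  have hinj : Function.Injective fun p : ι × Bool => bif p.2 then Sum.inl p.1 else Sum.inr p.1 := by
    rintro ⟨i, _ | _⟩ ⟨j, _ | _⟩ h <;> simp_all
  convert (h.precomp hinj).curry fun ⟨i, b⟩ => ?_ using 1
  · ext i ω b; cases b <;> rfl
  · cases b
    exacts [hY i, hX i]

lemma ProbabilityTheory.iIndep.measure_inter_biInter {Ω ι : Type*} [MeasurableSpace Ω]
    [DecidableEq ι] {m : ι → MeasurableSpace Ω} {P : Measure Ω} (hind : iIndep m P)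
    {S : Finset ι} {k : ι} (hk : k ∉ S) {E : Set Ω} (hE : MeasurableSet[m k] E)
    {G : ι → Set Ω} (hG : ∀ j ∈ S, MeasurableSet[m j] (G j)) :
    P (E ∩ ⋂ j ∈ S, G j) = P E * ∏ j ∈ S, P (G j) := by
  have h := hind.meas_biInter (S := insert k S) (s := Function.update G k E) fun j hj => by
    rcases eq_or_ne j k with rfl | hjk
    · simpa using hE
    · simpa [hjk] using hG j ((mem_insert.1 hj).resolve_left hjk)
  have hS : ∀ j ∈ S, Function.update G k E j = G j := fun j hj =>
    Function.update_of_ne (ne_of_mem_of_not_mem hj hk) E G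
  rwa [set_biInter_insert, prod_insert hk, Function.update_self, Set.iInter₂_congr hS,
    prod_congr rfl fun j hj => congrArg P (hS j hj)] at h

lemma lintegral_card_eq_tsum_measure {Ω : Type*} [MeasurableSpace Ω] {P : Measure Ω}
    {s : Ω → Finset ℕ} (hs : ∀ i, MeasurableSet {x | i ∈ s x}) :
    ∫⁻ x, (#(s x) : ℝ≥0∞) ∂P = ∑' i, P {x | i ∈ s x} := by
  have hcard : ∀ x, (#(s x) : ℝ≥0∞) = ∑' i, {y | i ∈ s y}.indicator 1 x := fun x => by
    rw [tsum_eq_sum (s := s x) fun i hi => by simp [hi]]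
    simp [Set.indicator_apply]
  simp_rw [hcard]
  rw [lintegral_tsum (f := fun i => {y | i ∈ s y}.indicator 1)
    fun i => (measurable_one.indicator (hs i)).aemeasurable]
  exact tsum_congr fun i => lintegral_indicator_one (hs i)

lemma lintegral_natCast_eq_tsum_measure_lt {Ω : Type*} [MeasurableSpace Ω] {P : Measure Ω}
    {N : Ω → ℕ} (hN : Measurable N) :
    ∫⁻ x, (N x : ℝ≥0∞) ∂P = ∑' n, P {x | n < N x} := by
  simpa using lintegral_card_eq_tsum_measure (P := P) (s := fun x => range (N x))
    fun n => by simpa using measurableSet_lt measurable_const hN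

lemma condExp_comap_ae_eq_comp {Ω α : Type*} [MeasurableSpace Ω] {P : Measure Ω}
    [IsFiniteMeasure P] [MeasurableSpace α] [Countable α] [MeasurableSingletonClass α]
    {R : Ω → α} (hR : Measurable R) {f : Ω → ℝ} (hf : Integrable f P) {g : α → ℝ}
    (hg : Integrable (g ∘ R) P)
    (hfg : ∀ r, ∫ x in R ⁻¹' {r}, f x ∂P = P.real (R ⁻¹' {r}) * g r) :
    P[f | MeasurableSpace.comap R ‹_›] =ᵐ[P] g ∘ R := by
  have hle : MeasurableSpace.comap R ‹_› ≤ ‹MeasurableSpace Ω› := hR.comap_le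
  have hfiber : ∀ r, MeasurableSet (R ⁻¹' {r}) := fun r => hR (measurableSet_singleton r)
  refine (ae_eq_condExp_of_forall_setIntegral_eq hle hf (fun _ _ _ => hg.integrableOn) ?_
    ((measurable_of_countable g).comp (Measurable.of_comap_le le_rfl)).aestronglyMeasurable).symm
  rintro _ ⟨B, -, rfl⟩ -
  have hU : R ⁻¹' B = ⋃ r : B, R ⁻¹' {(r : α)} := by ext; simp
  have hdisj : Pairwise (Function.onFun Disjoint fun r : B => R ⁻¹' {(r : α)}) :=
    fun r s hrs => (Set.disjoint_singleton.2 (Subtype.coe_ne_coe.2 hrs)).preimage R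
  rw [hU, integral_iUnion (fun r : B => hfiber r) hdisj hg.integrableOn,
    integral_iUnion (fun r : B => hfiber r) hdisj hf.integrableOn]
  refine tsum_congr fun r => ?_
  rw [hfg, setIntegral_congr_fun (hfiber r) (g := fun _ => g r) (fun x hx => by simp_all),
    setIntegral_const, smul_eq_mul]

lemma tendsto_measureReal_le_atTop {Ω : Type*} [MeasurableSpace Ω] {P : Measure Ω}
    [IsProbabilityMeasure P] (N : Ω → ℕ) :
    Tendsto (fun j => P.real {x | N x ≤ j}) atTop (𝓝 1) := by
  have hmono : Monotone fun j => {x | N x ≤ j} := fun a b hab x (hx : N x ≤ a) => hx.trans hab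
  have hU : ⋃ j, {x | N x ≤ j} = Set.univ :=
    Set.eq_univ_of_forall fun x => Set.mem_iUnion.2 ⟨N x, Set.mem_ofPred.2 le_rfl⟩
  have h := tendsto_measure_iUnion_atTop (μ := P) hmono
  rw [hU, measure_univ] at h
  simpa [Function.comp_def, measureReal_def] using
    (ENNReal.tendsto_toReal ENNReal.one_ne_top).comp h

lemma summable_prod_Icc_one_sub_mul {p : ℝ} (hp : p ∈ Set.Ioo 0 1) {q : ℕ → ℝ}
    (hq : ∀ j, q j ≤ 1) (hlim : Tendsto q atTop (𝓝 1)) :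
    Summable fun n => ∏ j ∈ Icc 1 n, (1 - p * q j) := by
  have hpos : ∀ j, 0 < 1 - p * q j := fun j =>
    sub_pos.2 (mul_lt_one_of_nonneg_of_lt_one_left hp.1.le hp.2 (hq j))
  refine summable_of_ratio_test_tendsto_lt_one (l := 1 - p) (by linarith [hp.1])
    (.of_forall fun n => (prod_pos fun j _ => hpos j).ne') ?_
  have hratio : ∀ n, ‖∏ j ∈ Icc 1 (n + 1), (1 - p * q j)‖ / ‖∏ j ∈ Icc 1 n, (1 - p * q j)‖
      = 1 - p * q (n + 1) := fun n => by
    rw [prod_Icc_succ_top (by omega), norm_mul, mul_div_cancel_left₀ _ (norm_ne_zero_iff.2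
      (prod_pos fun j _ => hpos j).ne'), Real.norm_of_nonneg (hpos _).le]
  simp_rw [hratio]
  simpa using ((hlim.comp (tendsto_add_atTop_nat 1)).const_mul p).const_sub 1

lemma sum_Ico_div_one_sub_mul {p : ℝ} {q : ℕ → ℝ} (hq : ∀ i, 1 - p * q i ≠ 0) {r : ℕ}
    (hr : r ≠ 0) :
    ∑ i ∈ Ico 1 r, (1 - p) / (1 - p * q i)
      = (1 - p) * ((r : ℝ) - 1) + p * ∑ i ∈ Icc 1 (r - 1), (1 - p) * q i / (1 - p * q i) := by
  obtain ⟨r, rfl⟩ := Nat.exists_eq_add_one.2 (Nat.pos_of_ne_zero hr)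
  have hterm : ∀ i, (1 - p) / (1 - p * q i) = (1 - p) + p * ((1 - p) * q i / (1 - p * q i)) :=
    fun i => by field_simp [hq i]; ring
  simp_rw [Ico_add_one_right_eq_Icc, Nat.add_sub_cancel, hterm, sum_add_distrib, mul_sum,
    sum_const, Nat.card_Icc, nsmul_eq_mul]
  push_cast
  ring

section FirstHit

variable {Ω : Type*} {A B : ℕ → Set Ω} {x : Ω} {r n : ℕ}

/-- `sInf ∅ = 0`, so `firstHit A x = 0` exactly when no `A j` with `j ≥ 1` contains `x`. -/
noncomputable def firstHit (A : ℕ → Set Ω) (x : Ω) : ℕ := sInf {r | 1 ≤ r ∧ x ∈ A r}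

open Classical in
noncomputable def markCount (A B : ℕ → Set Ω) (x : Ω) : ℕ := #{i ∈ Ico 1 (firstHit A x) | x ∈ B i}

lemma firstHit_eq_iff (hr : 1 ≤ r) :
    firstHit A x = r ↔ x ∈ A r ∧ ∀ j ∈ Ico 1 r, x ∉ A j := by
  constructor
  · rintro rfl
    have hne : {r | 1 ≤ r ∧ x ∈ A r}.Nonempty := by
      by_contra he
      simp [firstHit, Set.not_nonempty_iff_eq_empty.1 he] at hr
    exact ⟨(Nat.sInf_mem hne).2, fun j hj hjA =>
      Nat.notMem_of_lt_sInf (mem_Ico.1 hj).2 ⟨(mem_Ico.1 hj).1, hjA⟩⟩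
  · rintro ⟨hrA, hbefore⟩
    refine le_antisymm (Nat.sInf_le ⟨hr, hrA⟩) (le_csInf ⟨r, hr, hrA⟩ fun j hj => ?_)
    by_contra! hjr
    exact hbefore j (mem_Ico.2 ⟨hj.1, hjr⟩) hj.2

lemma firstHit_eq_zero_iff : firstHit A x = 0 ↔ ∀ j, 1 ≤ j → x ∉ A j := by
  simp [firstHit, Nat.sInf_eq_zero, Set.eq_empty_iff_forall_notMem]

lemma mem_biInter_Icc_compl_iff :
    x ∈ ⋂ j ∈ Icc 1 n, (A j)ᶜ ↔ firstHit A x = 0 ∨ n < firstHit A x := by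
  simp only [Set.mem_iInter, mem_Icc, Set.mem_compl_iff]
  rcases Nat.eq_zero_or_pos (firstHit A x) with h0 | hpos
  · simp only [h0, true_or, iff_true]
    exact fun j hj => firstHit_eq_zero_iff.1 h0 j hj.1
  · obtain ⟨hA, hbefore⟩ := (firstHit_eq_iff hpos).1 rfl
    refine ⟨fun h => Or.inr (not_le.1 fun hle => h _ ⟨hpos, hle⟩ hA), ?_⟩
    rintro (h | h) j hj
    · omega
    · exact hbefore j (mem_Ico.2 ⟨hj.1, by omega⟩)

lemma setOf_firstHit_eq (hr : 1 ≤ r) :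
    {x | firstHit A x = r} = A r ∩ ⋂ j ∈ Ico 1 r, (A j)ᶜ := by
  ext x
  simp [firstHit_eq_iff hr]

lemma lt_firstHit_inter_eq (hAB : ∀ j, Disjoint (A j) (B j)) (n : ℕ) :
    {x | n + 1 < firstHit A x} ∩ B (n + 1) = {x | n < firstHit A x} ∩ B (n + 1) := by
  ext x
  simp only [Set.mem_inter_iff, Set.mem_ofPred_eq, and_congr_left_iff]
  refine fun hxB => ⟨by omega, fun hn => lt_of_le_of_ne hn fun hR => ?_⟩
  exact Set.disjoint_left.1 (hAB _) ((firstHit_eq_iff (by omega)).1 hR.symm).1 hxB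

lemma markCount_le_firstHit (A B : ℕ → Set Ω) (x : Ω) : markCount A B x ≤ firstHit A x := by
  classical
  exact (card_filter_le _ _).trans (by simp)

variable [MeasurableSpace Ω]

lemma measurableSet_firstHit_eq (hA : ∀ j, MeasurableSet (A j)) (r : ℕ) :
    MeasurableSet {x | firstHit A x = r} := by
  rcases Nat.eq_zero_or_pos r with rfl | hr
  · simp_rw [firstHit_eq_zero_iff, ← Set.mem_compl_iff, Set.ofPred_forall]
    exact .iInter fun j => .iInter fun _ => (hA j).compl
  · rw [setOf_firstHit_eq hr]
    exact (hA r).inter (.biInter (Finset.countable_toSet _) fun j _ => (hA j).compl)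

lemma measurable_firstHit (hA : ∀ j, MeasurableSet (A j)) : Measurable (firstHit A) :=
  measurable_to_countable' fun r => measurableSet_firstHit_eq hA r

lemma measurable_markCount (hA : ∀ j, MeasurableSet (A j)) (hB : ∀ j, MeasurableSet (B j)) :
    Measurable (markCount A B) := by
  classical
  have hcount : Measurable fun p : Ω × ℕ => #{i ∈ Ico 1 p.2 | p.1 ∈ B i} := by
    refine measurable_from_prod_countable_left fun r => ?_
    simp_rw [card_filter]
    exact Finset.measurable_sum _ fun i _ => Measurable.ite (hB i) measurable_const measurable_const
  exact hcount.comp (measurable_id.prodMk (measurable_firstHit hA))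

variable {P : Measure Ω} {m : ℕ → MeasurableSpace Ω}

lemma measure_firstHit_eq (hind : iIndep m P) (hA : ∀ j, MeasurableSet[m j] (A j))
    (hr : 1 ≤ r) : P {x | firstHit A x = r} = P (A r) * ∏ j ∈ Ico 1 r, P (A j)ᶜ := by
  rw [setOf_firstHit_eq hr, hind.measure_inter_biInter (by simp) (hA r) fun j _ => (hA j).compl]

lemma measure_firstHit_eq_inter_mul (hind : iIndep m P) (hA : ∀ j, MeasurableSet[m j] (A j))
    (hB : ∀ j, MeasurableSet[m j] (B j)) (hAB : ∀ j, Disjoint (A j) (B j)) {i : ℕ}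
    (hi : i ∈ Ico 1 r) :
    P ({x | firstHit A x = r} ∩ B i) * P (A i)ᶜ = P {x | firstHit A x = r} * P (B i) := by
  classical
  have hr : 1 ≤ r := by have := mem_Ico.1 hi; omega
  -- since `B i ⊆ (A i)ᶜ`, intersecting `{firstHit A = r}` with `B i` swaps the factor `(A i)ᶜ`
  -- of the product for `B i`
  set G := Function.update (fun j => (A j)ᶜ) i (B i)
  have hset : {x | firstHit A x = r} ∩ B i = A r ∩ ⋂ j ∈ Ico 1 r, G j := by
    ext x
    simp only [setOf_firstHit_eq hr, Set.mem_inter_iff, Set.mem_iInter, G]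
    constructor
    · rintro ⟨⟨hxr, hx⟩, hxi⟩
      refine ⟨hxr, fun j hj => ?_⟩
      rcases eq_or_ne j i with rfl | hji
      · simpa using hxi
      · simpa [hji] using hx j hj
    · rintro ⟨hxr, hx⟩
      have hxi : x ∈ B i := by simpa using hx i hi
      refine ⟨⟨hxr, fun j hj => ?_⟩, hxi⟩
      rcases eq_or_ne j i with rfl | hji
      · exact Set.disjoint_right.1 (hAB j) hxi
      · simpa [hji] using hx j hj
  have hG : ∀ j ∈ Ico 1 r, MeasurableSet[m j] (G j) := fun j _ => by
    rcases eq_or_ne j i with rfl | hji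
    · simpa [G] using hB j
    · simpa [G, hji] using (hA j).compl
  have hPG : ∀ j, P (G j) = Function.update (fun j => P (A j)ᶜ) i (P (B i)) j := fun j => by
    rcases eq_or_ne j i with rfl | hji <;> simp [G, *]
  rw [hset, hind.measure_inter_biInter (by simp) (hA r) hG, measure_firstHit_eq hind hA hr,
    prod_congr rfl fun j _ => hPG j, prod_update_of_mem hi, sdiff_singleton_eq_erase,
    ← mul_prod_erase _ _ hi]
  ring

lemma ae_firstHit_ne_zero (hind : iIndep m P) (hA : ∀ j, MeasurableSet[m j] (A j))
    (hsum : ∑' n, ∏ j ∈ Icc 1 n, P (A j)ᶜ ≠ ∞) : ∀ᵐ x ∂P, firstHit A x ≠ 0 := by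
  refine measure_eq_zero_iff_ae_notMem.1 (le_antisymm (ge_of_tendsto'
    (ENNReal.tendsto_atTop_zero_of_tsum_ne_top hsum) fun n => ?_) bot_le)
  rw [← hind.meas_biInter fun j _ => (hA j).compl]
  exact measure_mono fun x hx => mem_biInter_Icc_compl_iff.2 (Or.inl hx)

lemma measure_lt_firstHit (hind : iIndep m P) (hA : ∀ j, MeasurableSet[m j] (A j))
    (hsum : ∑' n, ∏ j ∈ Icc 1 n, P (A j)ᶜ ≠ ∞) (n : ℕ) :
    P {x | n < firstHit A x} = ∏ j ∈ Icc 1 n, P (A j)ᶜ := by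
  rw [← hind.meas_biInter fun j _ => (hA j).compl]
  refine measure_congr (eventuallyEq_set.2 ?_)
  filter_upwards [ae_firstHit_ne_zero hind hA hsum] with x hx
  rw [mem_biInter_Icc_compl_iff, or_iff_right hx]

lemma measure_lt_firstHit_inter (hind : iIndep m P) (hA : ∀ j, MeasurableSet[m j] (A j))
    (hB : ∀ j, MeasurableSet[m j] (B j)) (hAB : ∀ j, Disjoint (A j) (B j))
    (hsum : ∑' n, ∏ j ∈ Icc 1 n, P (A j)ᶜ ≠ ∞) (n : ℕ) :
    P ({x | n + 1 < firstHit A x} ∩ B (n + 1)) = P (B (n + 1)) * P {x | n < firstHit A x} := by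
  rw [lt_firstHit_inter_eq hAB, measure_lt_firstHit hind hA hsum,
    ← hind.measure_inter_biInter (by simp) (hB _) fun j _ => (hA j).compl, Set.inter_comm]
  refine measure_congr (eventuallyEq_set.2 ?_)
  filter_upwards [ae_firstHit_ne_zero hind hA hsum] with x hx
  rw [Set.mem_inter_iff, Set.mem_inter_iff, Set.mem_ofPred_eq, mem_biInter_Icc_compl_iff,
    or_iff_right hx]

lemma lintegral_firstHit (hle : ∀ j, m j ≤ ‹MeasurableSpace Ω›) (hind : iIndep m P)
    (hA : ∀ j, MeasurableSet[m j] (A j)) (hsum : ∑' n, ∏ j ∈ Icc 1 n, P (A j)ᶜ ≠ ∞) :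
    ∫⁻ x, (firstHit A x : ℝ≥0∞) ∂P = ∑' n, ∏ j ∈ Icc 1 n, P (A j)ᶜ := by
  rw [lintegral_natCast_eq_tsum_measure_lt (measurable_firstHit fun j => hle j _ (hA j))]
  exact tsum_congr (measure_lt_firstHit hind hA hsum)

lemma lintegral_markCount (hle : ∀ j, m j ≤ ‹MeasurableSpace Ω›) (hind : iIndep m P)
    (hA : ∀ j, MeasurableSet[m j] (A j)) (hB : ∀ j, MeasurableSet[m j] (B j))
    (hAB : ∀ j, Disjoint (A j) (B j)) (hsum : ∑' n, ∏ j ∈ Icc 1 n, P (A j)ᶜ ≠ ∞) {b : ℝ≥0∞}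
    (hb : ∀ j, P (B j) = b) :
    ∫⁻ x, (markCount A B x : ℝ≥0∞) ∂P = b * ∫⁻ x, (firstHit A x : ℝ≥0∞) ∂P := by
  classical
  have hmeasR := measurable_firstHit fun j => hle j _ (hA j)
  calc ∫⁻ x, (markCount A B x : ℝ≥0∞) ∂P
      = ∑' i, P {x | i ∈ {i ∈ Ico 1 (firstHit A x) | x ∈ B i}} :=
        lintegral_card_eq_tsum_measure fun i => by
          simp only [mem_filter, mem_Ico]
          exact ((MeasurableSet.const _).inter (measurableSet_lt measurable_const hmeasR)).inter
            (hle i _ (hB i))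
    _ = ∑' n, P ({x | n + 1 < firstHit A x} ∩ B (n + 1)) := by
        rw [tsum_eq_zero_add' ENNReal.summable]
        simp [Set.ofPred_and]
    _ = ∑' n, b * P {x | n < firstHit A x} :=
        tsum_congr fun n => by rw [measure_lt_firstHit_inter hind hA hB hAB hsum, hb]
    _ = b * ∫⁻ x, (firstHit A x : ℝ≥0∞) ∂P := by
        rw [ENNReal.tsum_mul_left, lintegral_natCast_eq_tsum_measure_lt hmeasR]

lemma integrable_firstHit (hle : ∀ j, m j ≤ ‹MeasurableSpace Ω›) (hind : iIndep m P)
    (hA : ∀ j, MeasurableSet[m j] (A j)) (hsum : ∑' n, ∏ j ∈ Icc 1 n, P (A j)ᶜ ≠ ∞) :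
    Integrable (fun x => (firstHit A x : ℝ)) P := by
  have hmeas : Measurable fun x => (firstHit A x : ℝ≥0∞) :=
    measurable_from_nat.comp (measurable_firstHit fun j => hle j _ (hA j))
  simpa using integrable_toReal_of_lintegral_ne_top hmeas.aemeasurable
    (by rwa [lintegral_firstHit hle hind hA hsum])

lemma integrable_markCount (hle : ∀ j, m j ≤ ‹MeasurableSpace Ω›) (hind : iIndep m P)
    (hA : ∀ j, MeasurableSet[m j] (A j)) (hB : ∀ j, MeasurableSet[m j] (B j))
    (hsum : ∑' n, ∏ j ∈ Icc 1 n, P (A j)ᶜ ≠ ∞) :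
    Integrable (fun x => (markCount A B x : ℝ)) P :=
  (integrable_firstHit hle hind hA hsum).mono'
    (measurable_from_nat.comp (measurable_markCount (fun j => hle j _ (hA j))
      fun j => hle j _ (hB j))).aestronglyMeasurable
    (.of_forall fun x => by simpa using markCount_le_firstHit A B x)

lemma integral_markCount (hle : ∀ j, m j ≤ ‹MeasurableSpace Ω›) (hind : iIndep m P)
    (hA : ∀ j, MeasurableSet[m j] (A j)) (hB : ∀ j, MeasurableSet[m j] (B j))
    (hAB : ∀ j, Disjoint (A j) (B j)) (hsum : ∑' n, ∏ j ∈ Icc 1 n, P (A j)ᶜ ≠ ∞) {b : ℝ≥0∞}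
    (hb : ∀ j, P (B j) = b) :
    ∫ x, (markCount A B x : ℝ) ∂P = b.toReal * ∫ x, (firstHit A x : ℝ) ∂P := by
  have hcast : ∀ N : Ω → ℕ, Measurable N →
      ∫ x, (N x : ℝ) ∂P = (∫⁻ x, (N x : ℝ≥0∞) ∂P).toReal := fun N hN => by
    simpa using integral_toReal (measurable_from_nat.comp hN).aemeasurable
      (.of_forall fun x => ENNReal.natCast_lt_top (N x))
  rw [hcast _ (measurable_markCount (fun j => hle j _ (hA j)) fun j => hle j _ (hB j)),
    hcast _ (measurable_firstHit fun j => hle j _ (hA j)),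
    lintegral_markCount hle hind hA hB hAB hsum hb, ENNReal.toReal_mul]

lemma measureReal_firstHit_eq_inter [IsFiniteMeasure P] (hind : iIndep m P)
    (hA : ∀ j, MeasurableSet[m j] (A j)) (hB : ∀ j, MeasurableSet[m j] (B j))
    (hAB : ∀ j, Disjoint (A j) (B j)) {r i : ℕ} (hi : i ∈ Ico 1 r) :
    P.real ({x | firstHit A x = r} ∩ B i)
      = P.real {x | firstHit A x = r} * (P.real (B i) / P.real (A i)ᶜ) := by
  have hprod := congrArg ENNReal.toReal (measure_firstHit_eq_inter_mul hind hA hB hAB hi)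
  simp only [ENNReal.toReal_mul, ← measureReal_def] at hprod
  rcases eq_or_ne (P.real (A i)ᶜ) 0 with h0 | h0
  · have hsub : {x | firstHit A x = r} ⊆ (A i)ᶜ := fun x hx =>
      ((firstHit_eq_iff (by have := mem_Ico.1 hi; omega)).1 hx).2 i hi
    have hR0 : P.real {x | firstHit A x = r} = 0 :=
      le_antisymm (h0 ▸ measureReal_mono hsub) measureReal_nonneg
    rw [hR0, zero_mul]
    exact le_antisymm (hR0 ▸ measureReal_mono Set.inter_subset_left) measureReal_nonneg
  · rw [mul_div_assoc', eq_div_iff h0, hprod]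

lemma setIntegral_markCount [IsFiniteMeasure P] (hle : ∀ j, m j ≤ ‹MeasurableSpace Ω›)
    (hind : iIndep m P) (hA : ∀ j, MeasurableSet[m j] (A j)) (hB : ∀ j, MeasurableSet[m j] (B j))
    (hAB : ∀ j, Disjoint (A j) (B j)) (r : ℕ) :
    ∫ x in {x | firstHit A x = r}, (markCount A B x : ℝ) ∂P
      = P.real {x | firstHit A x = r} * ∑ i ∈ Ico 1 r, P.real (B i) / P.real (A i)ᶜ := by
  classical
  have hcount : Set.EqOn (fun x => (markCount A B x : ℝ))
      (fun x => ∑ i ∈ Ico 1 r, (B i).indicator 1 x) {x | firstHit A x = r} :=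
      fun x (hx : firstHit A x = r) => by
    simp only [markCount, hx, card_filter, Nat.cast_sum, Nat.cast_ite,
      Nat.cast_one, Nat.cast_zero, Set.indicator_apply, Pi.one_apply]
  rw [setIntegral_congr_fun (measurableSet_firstHit_eq (fun j => hle j _ (hA j)) r) hcount,
    integral_finsetSum _ fun i _ => (integrable_const 1).indicator (hle i _ (hB i)),
    mul_sum]
  refine sum_congr rfl fun i hi => ?_
  rw [integral_indicator_one (hle i _ (hB i)), measureReal_restrict_apply (hle i _ (hB i)),
    Set.inter_comm, measureReal_firstHit_eq_inter hind hA hB hAB hi]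

lemma condExp_markCount [IsFiniteMeasure P] (hle : ∀ j, m j ≤ ‹MeasurableSpace Ω›)
    (hind : iIndep m P) (hA : ∀ j, MeasurableSet[m j] (A j)) (hB : ∀ j, MeasurableSet[m j] (B j))
    (hAB : ∀ j, Disjoint (A j) (B j)) (hsum : ∑' n, ∏ j ∈ Icc 1 n, P (A j)ᶜ ≠ ∞) :
    P[fun x => (markCount A B x : ℝ) | MeasurableSpace.comap (firstHit A) inferInstance]
      =ᵐ[P] fun x => ∑ i ∈ Ico 1 (firstHit A x), P.real (B i) / P.real (A i)ᶜ := by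
  have hmeasR := measurable_firstHit fun j => hle j _ (hA j)
  have hratio : ∀ i, 0 ≤ P.real (B i) / P.real (A i)ᶜ ∧ P.real (B i) / P.real (A i)ᶜ ≤ 1 :=
    fun i => ⟨by positivity,
      div_le_one_of_le₀ (measureReal_mono (hAB i).subset_compl_left) measureReal_nonneg⟩
  refine condExp_comap_ae_eq_comp hmeasR (integrable_markCount hle hind hA hB hsum) ?_
    (setIntegral_markCount hle hind hA hB hAB)
  refine (integrable_firstHit hle hind hA hsum).mono'
    ((measurable_of_countable _).comp hmeasR).aestronglyMeasurable (.of_forall fun x => ?_)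
  rw [Function.comp_apply, Real.norm_of_nonneg (sum_nonneg fun i _ => (hratio i).1)]
  calc ∑ i ∈ Ico 1 (firstHit A x), P.real (B i) / P.real (A i)ᶜ
      ≤ #(Ico 1 (firstHit A x)) • (1 : ℝ) := sum_le_card_nsmul _ _ _ fun i _ => (hratio i).2
    _ ≤ firstHit A x := by simp

end FirstHit

section RenewalModel

variable {Ω : Type*} [MeasurableSpace Ω] {P : Measure Ω} [IsProbabilityMeasure P] {p : ℝ}

lemma measure_setOf_eq_zero_eq_one_sub {W : Ω → ℕ} (hW : Measurable W) (hWval : ∀ x, W x ≤ 1)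
    (hWlaw : P {x | W x = 1} = ENNReal.ofReal p) (hp : 0 ≤ p) :
    P {x | W x = 0} = ENNReal.ofReal (1 - p) := by
  have hcompl : {x | W x = 0} = {x | W x = 1}ᶜ := by
    ext x; have := hWval x; simp only [Set.mem_ofPred_eq, Set.mem_compl_iff]; omega
  have hmeas : MeasurableSet {x | W x = 1} := hW (measurableSet_singleton 1)
  rw [hcompl, prob_compl_eq_one_sub hmeas, hWlaw,
    ENNReal.ofReal_sub _ hp, ENNReal.ofReal_one]

variable {ξ W : ℕ → Ω → ℕ} {q : ℕ → ℝ}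

lemma measureReal_compl_hit (hp : 0 ≤ p) (hξmeas : ∀ i, Measurable (ξ i))
    (hWmeas : ∀ i, Measurable (W i)) (hξid : ∀ i j, IdentDistrib (ξ i) (ξ j) P P)
    (hWlaw : ∀ i, P {x | W i x = 1} = ENNReal.ofReal p)
    (hq : ∀ j, (P {x | ξ 1 x ≤ j}).toReal = q j) (hindep : iIndepFun (Sum.elim W ξ) P) (j : ℕ) :
    P.real {x | W j x = 1 ∧ ξ j x ≤ j}ᶜ = 1 - p * q j := by
  have hind : IndepFun (W j) (ξ j) P := hindep.indepFun (i := .inl j) (j := .inr j) (by simp)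
  have hξ : P.real {x | ξ j x ≤ j} = q j := by
    rw [← hq j]
    exact congrArg ENNReal.toReal ((hξid j 1).measure_mem_eq measurableSet_Iic)
  have hW : P.real {x | W j x = 1} = p := by rw [measureReal_def, hWlaw, ENNReal.toReal_ofReal hp]
  have hmeas : MeasurableSet {x | W j x = 1 ∧ ξ j x ≤ j} :=
    (hWmeas j (measurableSet_singleton 1)).inter (hξmeas j measurableSet_Iic)
  rw [probReal_compl_eq_one_sub hmeas]
  simp only [measureReal_def] at hξ hW ⊢
  rw [← hξ, ← hW, ← ENNReal.toReal_mul]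
  exact congrArg (fun t => 1 - ENNReal.toReal t)
    (hind.measure_inter_preimage_eq_mul _ _ (measurableSet_singleton 1) measurableSet_Iic)

lemma tsum_prod_measure_compl_hit_ne_top (hp : p ∈ Set.Ioo 0 1) (hξmeas : ∀ i, Measurable (ξ i))
    (hWmeas : ∀ i, Measurable (W i)) (hξid : ∀ i j, IdentDistrib (ξ i) (ξ j) P P)
    (hWlaw : ∀ i, P {x | W i x = 1} = ENNReal.ofReal p)
    (hq : ∀ j, (P {x | ξ 1 x ≤ j}).toReal = q j) (hindep : iIndepFun (Sum.elim W ξ) P) :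
    ∑' n, ∏ j ∈ Icc 1 n, P {x | W j x = 1 ∧ ξ j x ≤ j}ᶜ ≠ ∞ := by
  have hq1 : ∀ j, q j ≤ 1 := fun j => hq j ▸ measureReal_le_one
  have hpos : ∀ j, 0 < 1 - p * q j := fun j =>
    sub_pos.2 (mul_lt_one_of_nonneg_of_lt_one_left hp.1.le hp.2 (hq1 j))
  have hlim : Tendsto q atTop (𝓝 1) := by
    simpa only [measureReal_def, hq] using tendsto_measureReal_le_atTop (P := P) (ξ 1)
  have hcompl : ∀ j, P {x | W j x = 1 ∧ ξ j x ≤ j}ᶜ = ENNReal.ofReal (1 - p * q j) := fun j => by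
    rw [← measureReal_compl_hit hp.1.le hξmeas hWmeas hξid hWlaw hq hindep, ofReal_measureReal]
  simp_rw [hcompl, ← ENNReal.ofReal_prod_of_nonneg fun j _ => (hpos j).le]
  rw [← ENNReal.ofReal_tsum_of_nonneg (fun n => prod_nonneg fun j _ => (hpos j).le)
    (summable_prod_Icc_one_sub_mul hp hq1 hlim)]
  exact ENNReal.ofReal_ne_top

lemma sum_Ico_measureReal_div_compl_hit (hp : p ∈ Set.Ioo 0 1) (hξmeas : ∀ i, Measurable (ξ i))
    (hWmeas : ∀ i, Measurable (W i)) (hWval : ∀ i x, W i x ≤ 1)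
    (hξid : ∀ i j, IdentDistrib (ξ i) (ξ j) P P)
    (hWlaw : ∀ i, P {x | W i x = 1} = ENNReal.ofReal p)
    (hq : ∀ j, (P {x | ξ 1 x ≤ j}).toReal = q j) (hindep : iIndepFun (Sum.elim W ξ) P) {r : ℕ}
    (hr : r ≠ 0) :
    ∑ i ∈ Ico 1 r, P.real {x | W i x = 0} / P.real {x | W i x = 1 ∧ ξ i x ≤ i}ᶜ
      = (1 - p) * ((r : ℝ) - 1) + p * ∑ i ∈ Icc 1 (r - 1), (1 - p) * q i / (1 - p * q i) := by
  have hq1 : ∀ j, q j ≤ 1 := fun j => hq j ▸ measureReal_le_one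
  have hB : ∀ i, P.real {x | W i x = 0} = 1 - p := fun i => by
    rw [measureReal_def, measure_setOf_eq_zero_eq_one_sub (hWmeas i) (hWval i) (hWlaw i) hp.1.le,
      ENNReal.toReal_ofReal (by linarith [hp.2])]
  simp only [hB, measureReal_compl_hit hp.1.le hξmeas hWmeas hξid hWlaw hq hindep]
  exact sum_Ico_div_one_sub_mul
    (fun i => (sub_pos.2 (mul_lt_one_of_nonneg_of_lt_one_left hp.1.le hp.2 (hq1 i))).ne') hr

end RenewalModel

theorem stmt6_general
    {Ω : Type*} [MeasurableSpace Ω] (P : MeasureTheory.Measure Ω)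
    [MeasureTheory.IsProbabilityMeasure P]
    (p : ℝ) (hp : p ∈ Set.Ioo (0 : ℝ) 1)
    (ξ W : ℕ → Ω → ℕ) (q : ℕ → ℝ)
    (hξmeas : ∀ i, Measurable (ξ i)) (hWmeas : ∀ i, Measurable (W i))
    (hWval : ∀ i x, W i x ≤ 1)
    (hξid : ∀ i j, ProbabilityTheory.IdentDistrib (ξ i) (ξ j) P P)
    (hWlaw : ∀ i, P {x | W i x = 1} = ENNReal.ofReal p)
    (hq : ∀ j, (P {x | ξ 1 x ≤ j}).toReal = q j)
    (hindep : ProbabilityTheory.iIndepFun (Sum.elim W ξ) P)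
    (R J : Ω → ℕ)
    (hR : R = fun x => sInf {r : ℕ | 1 ≤ r ∧ W r x = 1 ∧ ξ r x ≤ r})
    (hJ : J = fun x => ((Finset.Ico 1 (R x)).filter fun i => W i x = 0).card) :
    (MeasureTheory.condExp (MeasurableSpace.comap R inferInstance) P (fun x => (J x : ℝ)) =ᵐ[P]
      fun x => (1 - p) * ((R x : ℝ) - 1) +
        p * ∑ i ∈ Finset.Icc 1 (R x - 1), (1 - p) * q i / (1 - p * q i)) ∧
    ∫ x, (J x : ℝ) ∂P = (1 - p) * ∫ x, (R x : ℝ) ∂P := by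
  set Z : ℕ → Ω → Bool → ℕ := fun j ω b => bif b then W j ω else ξ j ω
  set A : ℕ → Set Ω := fun j => {x | W j x = 1 ∧ ξ j x ≤ j}
  set B : ℕ → Set Ω := fun j => {x | W j x = 0}
  have hind := (hindep.pair_of_sumElim hWmeas hξmeas).iIndep
  have hle : ∀ j, MeasurableSpace.comap (Z j) inferInstance ≤ ‹MeasurableSpace Ω› := fun j =>
    (measurable_pi_lambda _ fun b => by cases b; exacts [hξmeas j, hWmeas j]).comap_le
  have hA : ∀ j, MeasurableSet[MeasurableSpace.comap (Z j) inferInstance] (A j) := fun j =>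
    ⟨{z | z true = 1 ∧ z false ≤ j}, (Set.to_countable _).measurableSet, rfl⟩
  have hB : ∀ j, MeasurableSet[MeasurableSpace.comap (Z j) inferInstance] (B j) := fun j =>
    ⟨{z | z true = 0}, (Set.to_countable _).measurableSet, rfl⟩
  have hAB : ∀ j, Disjoint (A j) (B j) := fun j =>
    Set.disjoint_left.2 fun x hxA hxB => by simp_all [A, B]
  have hsum := tsum_prod_measure_compl_hit_ne_top hp hξmeas hWmeas hξid hWlaw hq hindep
  have hRA : R = firstHit A := hR
  have hJA : J = markCount A B := by subst hJ; funext x; simp [markCount, hRA, B]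
  subst hRA hJA
  refine ⟨(condExp_markCount hle hind hA hB hAB hsum).trans ?_, ?_⟩
  · filter_upwards [ae_firstHit_ne_zero hind hA hsum] with x hx
    exact sum_Ico_measureReal_div_compl_hit hp hξmeas hWmeas hWval hξid hWlaw hq hindep hx
  · rw [integral_markCount hle hind hA hB hAB hsum
      (fun j => measure_setOf_eq_zero_eq_one_sub (hWmeas j) (hWval j) (hWlaw j) hp.1.le),
      ENNReal.toReal_ofReal (by linarith [hp.2])]

/-- In the renewal construction, with `θ i = (1−p)·q i/(1 − p·q i)`,
the conditional expectation of the arrival count `J` given `R` satisfies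
`E[J | R] = (1−p)(R − 1) + p·∑_{i=1}^{R−1} θ i` almost surely, and taking expectations,
`E[J] = (1−p)·E[R]`. -/
theorem stmt6
    {Ω : Type*} [MeasurableSpace Ω] (P : MeasureTheory.Measure Ω)
    [MeasureTheory.IsProbabilityMeasure P]
    (p : ℝ) (hp : p ∈ Set.Ioo (0 : ℝ) 1)
    (ξ W : ℕ → Ω → ℕ) (q : ℕ → ℝ)
    (hξmeas : ∀ i, Measurable (ξ i)) (hWmeas : ∀ i, Measurable (W i))
    (hξpos : ∀ i x, 1 ≤ ξ i x) (hWval : ∀ i x, W i x ≤ 1)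
    (hξid : ∀ i j, ProbabilityTheory.IdentDistrib (ξ i) (ξ j) P P)
    (hWlaw : ∀ i, P {x | W i x = 1} = ENNReal.ofReal p)
    (hq : ∀ j, (P {x | ξ 1 x ≤ j}).toReal = q j)
    (hindep : ProbabilityTheory.iIndepFun (Sum.elim W ξ) P)
    (R J : Ω → ℕ)
    (hR : R = fun x => sInf {r : ℕ | 1 ≤ r ∧ W r x = 1 ∧ ξ r x ≤ r})
    (hJ : J = fun x => ((Finset.Ico 1 (R x)).filter fun i => W i x = 0).card) :
    (MeasureTheory.condExp (MeasurableSpace.comap R inferInstance) P (fun x => (J x : ℝ)) =ᵐ[P]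
      fun x => (1 - p) * ((R x : ℝ) - 1) +
        p * ∑ i ∈ Finset.Icc 1 (R x - 1), (1 - p) * q i / (1 - p * q i)) ∧
    ∫ x, (J x : ℝ) ∂P = (1 - p) * ∫ x, (R x : ℝ) ∂P :=
  stmt6_general P p hp ξ W q hξmeas hWmeas hWval hξid hWlaw hq hindep R J hR hJ
end

section
/- Assume E[ξ_1] < ∞. Then for every p ∈ (0,1) there exist constants 0 < c_p ≤ C_p < ∞ (depending only on p and the distribution of ξ_1) such that for every integer n ≥ 1: c_p·(1−p)^n ≤ P(J_p ≥ n) ≤ C_p·(1−p)^n. -/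
/-!
Lower bound: the event `ω_1 = ⋯ = ω_{k-1} = 0, ω_k = 1, ξ_k ≤ k` forces `R_p = k` and
`J_p = k - 1`; it has probability `(1-p)^{k-1} p q_k`, and `k = n + m + 1` with `q_m > 0` gives
`c_p (1-p)^n`.

Upper bound: on `{J_p ≥ n}` let `T` be the set of indices `i` with `ω_i = 1` before the `n`-th
zero. Each such `i` precedes `R_p`, so `ξ_i > i`. Hence `{J_p ≥ n}` is covered by the events
"`ω` has its ones exactly at `T` up to index `n + |T|`, and `ξ_i > i` on `T`", of probability
`(1-p)^n ∏_{i ∈ T} p P(ξ_1 > i)`. Summing over all finite `T` gives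
`(1-p)^n ∏_i (1 + p P(ξ_1 > i)) ≤ (1-p)^n exp(p E[ξ_1])`.
-/

open MeasureTheory ProbabilityTheory Finset
open scoped ENNReal

theorem Nat.exists_eq_of_map_succ_le_succ {f : ℕ → ℕ} (hf : ∀ j, f (j + 1) ≤ f j + 1)
    {n : ℕ} (h0 : f 0 ≤ n) {j : ℕ} (hj : n ≤ f j) : ∃ k ≤ j, f k = n := by
  induction j with
  | zero => exact ⟨0, le_rfl, le_antisymm h0 hj⟩
  | succ j ih =>
    by_cases h : n ≤ f j
    · obtain ⟨k, hkj, hk⟩ := ih h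
      exact ⟨k, by omega, hk⟩
    · exact ⟨j + 1, le_rfl, by have := hf j; omega⟩

theorem ENNReal.tsum_finset_prod_le_exp {ι : Type*} (a : ι → ℝ≥0∞) (ha : ∑' i, a i ≠ ∞) :
    ∑' T : Finset ι, ∏ i ∈ T, a i ≤ ENNReal.ofReal (Real.exp (∑' i, a i).toReal) := by
  classical
  have ha_ne_top : ∀ i, a i ≠ ∞ := fun i => ne_top_of_le_ne_top ha (ENNReal.le_tsum i)
  rw [ENNReal.tsum_eq_iSup_sum]
  refine iSup_le fun F => ?_
  set U := F.sup id
  calc ∑ T ∈ F, ∏ i ∈ T, a i ≤ ∑ T ∈ U.powerset, ∏ i ∈ T, a i :=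
        sum_le_sum_of_subset fun T hT => mem_powerset.2 (le_sup (f := id) hT)
    _ = ENNReal.ofReal (∏ i ∈ U, (1 + (a i).toReal)) := by
        rw [← prod_one_add, ENNReal.ofReal_prod_of_nonneg fun i _ => by positivity]
        refine prod_congr rfl fun i _ => ?_
        rw [ENNReal.ofReal_add zero_le_one ENNReal.toReal_nonneg, ENNReal.ofReal_one,
          ENNReal.ofReal_toReal (ha_ne_top i)]
    _ ≤ ENNReal.ofReal (Real.exp (∑ i ∈ U, (a i).toReal)) :=
        ENNReal.ofReal_le_ofReal (Real.prod_one_add_le_exp_sum U fun _ => ENNReal.toReal_nonneg)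
    _ ≤ ENNReal.ofReal (Real.exp (∑' i, a i).toReal) := by
        rw [ENNReal.tsum_toReal_eq ha_ne_top]
        exact ENNReal.ofReal_le_ofReal (Real.exp_le_exp.2 (Summable.sum_le_tsum _
          (fun _ _ => ENNReal.toReal_nonneg) (ENNReal.summable_toReal ha)))

theorem ProbabilityTheory.iIndepFun.measure_inter_biInter_preimage_sumElim {Ω ι κ β : Type*}
    [MeasurableSpace Ω] [MeasurableSpace β] {μ : Measure Ω} {X : ι → Ω → β} {Y : κ → Ω → β}
    (h : iIndepFun (Sum.elim X Y) μ) (I : Finset ι) (K : Finset κ) {A : ι → Set β}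
    {B : κ → Set β} (hA : ∀ i ∈ I, MeasurableSet (A i)) (hB : ∀ k ∈ K, MeasurableSet (B k)) :
    μ ((⋂ i ∈ I, X i ⁻¹' A i) ∩ ⋂ k ∈ K, Y k ⁻¹' B k) =
      (∏ i ∈ I, μ (X i ⁻¹' A i)) * ∏ k ∈ K, μ (Y k ⁻¹' B k) := by
  have hinter : (⋂ j ∈ I.disjSum K, Sum.elim X Y j ⁻¹' Sum.elim A B j) =
      (⋂ i ∈ I, X i ⁻¹' A i) ∩ ⋂ k ∈ K, Y k ⁻¹' B k := by
    ext x
    simp [Set.mem_iInter, Sum.forall]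
  rw [← hinter, h.measure_inter_preimage_eq_mul _ (by simpa [Sum.forall] using ⟨hA, hB⟩),
    prod_disjSum]
  rfl

section Probability

variable {Ω : Type*} [MeasurableSpace Ω] {μ : Measure Ω} {f : Ω → ℕ}

theorem measure_preimage_zero_eq_one_sub [IsProbabilityMeasure μ] (hf : Measurable f)
    (hf1 : ∀ x, f x ≤ 1) : μ (f ⁻¹' {0}) = 1 - μ (f ⁻¹' {1}) := by
  rw [← prob_compl_eq_one_sub (hf (measurableSet_singleton 1))]
  congr 1
  ext x
  have := hf1 x
  simp only [Set.mem_preimage, Set.mem_singleton_iff, Set.mem_compl_iff]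
  omega

theorem exists_measure_preimage_Iic_ne_zero [NeZero μ] (f : Ω → ℕ) :
    ∃ m, μ (f ⁻¹' Set.Iic m) ≠ 0 := by
  by_contra! h
  exact NeZero.ne μ (by simpa [← Set.preimage_iUnion] using measure_iUnion_null h)

theorem lintegral_natCast_eq_tsum_measure_lt_s9 (μ : Measure Ω) (hf : Measurable f) :
    ∫⁻ x, (f x : ℝ≥0∞) ∂μ = ∑' i : ℕ, μ (f ⁻¹' Set.Ioi i) := by
  have hcount : ∀ x, (f x : ℝ≥0∞) = ∑' i : ℕ, (f ⁻¹' Set.Ioi i).indicator 1 x := by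
    intro x
    rw [tsum_eq_sum (s := range (f x)) fun i hi => by simp_all]
    calc (f x : ℝ≥0∞) = ∑ i ∈ range (f x), 1 := by simp
      _ = _ := sum_congr rfl fun i hi => by simp_all
  have hmeas : ∀ i : ℕ, MeasurableSet (f ⁻¹' Set.Ioi i) := fun i => hf measurableSet_Ioi
  simp_rw [hcount]
  rw [lintegral_tsum fun i => (measurable_one.indicator (hmeas i)).aemeasurable]
  simp_rw [lintegral_indicator_one (hmeas _)]

theorem tsum_measure_preimage_Ioi_ne_top (hf : Measurable f)
    (hint : Integrable (fun x => (f x : ℝ)) μ) : ∑' i : ℕ, μ (f ⁻¹' Set.Ioi i) ≠ ∞ := by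
  rw [← lintegral_natCast_eq_tsum_measure_lt_s9 μ hf]
  simpa [ENNReal.ofReal_natCast] using hint.lintegral_lt_top.ne

end Probability

section Renewal

-- `sInf ∅ = 0`: when no renewal occurs, `R = 0` and no arrivals are counted.
noncomputable def renewalTime (w s : ℕ → ℕ) : ℕ := sInf {r | 1 ≤ r ∧ w r = 1 ∧ s r ≤ r}

noncomputable def arrivalCount (w s : ℕ → ℕ) : ℕ := #{i ∈ Ico 1 (renewalTime w s) | w i = 0}

variable {w s : ℕ → ℕ}

theorem lt_of_lt_renewalTime {i : ℕ} (hi : i < renewalTime w s) (hi1 : 1 ≤ i) (hwi : w i = 1) :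
    i < s i := by
  by_contra! h
  exact Nat.notMem_of_lt_sInf hi ⟨hi1, hwi, h⟩

theorem arrivalCount_eq_of_first_renewal {k : ℕ} (hk : 1 ≤ k) (hwk : w k = 1) (hsk : s k ≤ k)
    (hw : ∀ i ∈ Ico 1 k, w i = 0) : arrivalCount w s = k - 1 := by
  have hR : renewalTime w s = k := by
    refine le_antisymm (Nat.sInf_le ⟨hk, hwk, hsk⟩) (le_csInf ⟨k, hk, hwk, hsk⟩ ?_)
    rintro r ⟨hr1, hwr, -⟩
    by_contra! hrk
    simp [hw r (mem_Ico.2 ⟨hr1, hrk⟩)] at hwr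
  rw [arrivalCount, hR, filter_true_of_mem hw, Nat.card_Ico]

theorem exists_pattern_of_le_arrivalCount (hw : ∀ i, w i ≤ 1) {n : ℕ}
    (hn : n ≤ arrivalCount w s) :
    ∃ T : Finset ℕ, T ⊆ Icc 1 (n + #T) ∧
      (∀ i ∈ Icc 1 (n + #T), w i = if i ∈ T then 1 else 0) ∧ ∀ i ∈ T, i < s i := by
  set zeros : ℕ → ℕ := fun j => #{i ∈ Icc 1 j | w i = 0}
  have hzeros_succ : ∀ j, zeros (j + 1) ≤ zeros j + 1 := fun j => by
    refine (card_le_card fun i => ?_).trans (card_insert_le (j + 1) _)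
    simp only [mem_filter, mem_Icc, mem_insert]
    omega
  have hIco : Ico 1 (renewalTime w s) = Icc 1 (renewalTime w s - 1) := by
    ext i; simp only [mem_Ico, mem_Icc]; omega
  rw [arrivalCount, hIco] at hn
  obtain ⟨k, hkR, hk⟩ := Nat.exists_eq_of_map_succ_le_succ hzeros_succ (by simp [zeros]) hn
  -- `[1, k]` lies before the renewal time and holds exactly `n` zeros; `T` is the set of its ones.
  set T := {i ∈ Icc 1 k | w i = 1}
  have hzeros_eq : {i ∈ Icc 1 k | w i = 0} = {i ∈ Icc 1 k | ¬ w i = 1} :=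
    filter_congr fun i _ => by have := hw i; omega
  have hnT : n + #T = k := by
    rw [← hk, add_comm]
    simp only [zeros, hzeros_eq, T, card_filter_add_card_filter_not, Nat.card_Icc]
    omega
  refine ⟨T, hnT ▸ filter_subset _ _, fun i hi => ?_, fun i hi => ?_⟩
  · rw [hnT] at hi
    by_cases hwi : w i = 1
    · simp [T, hi, hwi]
    · have := hw i
      simp only [T, mem_filter, hwi, and_false, if_false]
      omega
  · obtain ⟨hi, hwi⟩ := mem_filter.1 hi
    rw [mem_Icc] at hi
    exact lt_of_lt_renewalTime (by omega) hi.1 hwi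

end Renewal

section Pattern

variable {Ω : Type*} [MeasurableSpace Ω] {P : Measure Ω} {W ξ : ℕ → Ω → ℕ} {a b : ℝ≥0∞}

theorem measure_pattern_inter (hindep : iIndepFun (Sum.elim W ξ) P)
    (hW1 : ∀ i, P (W i ⁻¹' {1}) = a) (hW0 : ∀ i, P (W i ⁻¹' {0}) = b) {I T : Finset ℕ}
    (hTI : T ⊆ I) (S : Finset ℕ) (U : ℕ → Set ℕ) :
    P ((⋂ i ∈ I, W i ⁻¹' {if i ∈ T then 1 else 0}) ∩ ⋂ i ∈ S, ξ i ⁻¹' U i) =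
      a ^ #T * b ^ (#I - #T) * ∏ i ∈ S, P (ξ i ⁻¹' U i) := by
  classical
  rw [hindep.measure_inter_biInter_preimage_sumElim I S (fun _ _ => .of_discrete)
    (fun _ _ => .of_discrete)]
  congr 1
  have : ∀ i, P (W i ⁻¹' {if i ∈ T then 1 else 0}) = if i ∈ T then a else b := fun i => by
    split_ifs <;> simp [hW1, hW0]
  simp_rw [this, prod_ite, prod_const, filter_mem_eq_inter, inter_eq_right.2 hTI]
  rw [filter_not, filter_mem_eq_inter, inter_eq_right.2 hTI, card_sdiff_of_subset hTI]

theorem le_measure_le_arrivalCount (hindep : iIndepFun (Sum.elim W ξ) P)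
    (hW1 : ∀ i, P (W i ⁻¹' {1}) = a) (hW0 : ∀ i, P (W i ⁻¹' {0}) = b)
    (hξid : ∀ i, IdentDistrib (ξ i) (ξ 1) P P) (n m : ℕ) :
    a * b ^ (n + m) * P (ξ 1 ⁻¹' Set.Iic m) ≤ P {x | n ≤ arrivalCount (W · x) (ξ · x)} := by
  set k := n + m + 1
  have hkI : {k} ⊆ Icc 1 k := singleton_subset_iff.2 (mem_Icc.2 ⟨by omega, le_rfl⟩)
  calc a * b ^ (n + m) * P (ξ 1 ⁻¹' Set.Iic m)
      ≤ a ^ #({k} : Finset ℕ) * b ^ (#(Icc 1 k) - #({k} : Finset ℕ)) *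
          ∏ i ∈ {k}, P (ξ i ⁻¹' Set.Iic i) := by
        simp only [card_singleton, pow_one, Nat.card_Icc, prod_singleton, k, Nat.add_sub_cancel,
          (hξid _).measure_mem_eq measurableSet_Iic]
        gcongr
        omega
    _ = P ((⋂ i ∈ Icc 1 k, W i ⁻¹' {if i ∈ ({k} : Finset ℕ) then 1 else 0}) ∩
          ⋂ i ∈ ({k} : Finset ℕ), ξ i ⁻¹' Set.Iic i) :=
        (measure_pattern_inter hindep hW1 hW0 hkI {k} Set.Iic).symm
    _ ≤ P {x | n ≤ arrivalCount (W · x) (ξ · x)} := by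
        refine measure_mono fun x ⟨hW, hξ⟩ => ?_
        simp only [Set.mem_iInter, Set.mem_preimage, Set.mem_singleton_iff, mem_Icc,
          mem_singleton, Set.mem_Iic] at hW hξ
        have hfirst := arrivalCount_eq_of_first_renewal (w := (W · x)) (s := (ξ · x))
          (k := k) (by omega) (by simpa using hW k ⟨by omega, le_rfl⟩) (hξ k rfl)
          (fun i hi => by
            rw [mem_Ico] at hi
            simpa [hi.2.ne] using hW i ⟨hi.1, hi.2.le⟩)
        change n ≤ _
        omega

theorem measure_le_arrivalCount_le (hindep : iIndepFun (Sum.elim W ξ) P)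
    (hW1 : ∀ i, P (W i ⁻¹' {1}) = a) (hW0 : ∀ i, P (W i ⁻¹' {0}) = b) (hWval : ∀ i x, W i x ≤ 1)
    (hξid : ∀ i, IdentDistrib (ξ i) (ξ 1) P P) (hsum : ∑' i, a * P (ξ 1 ⁻¹' Set.Ioi i) ≠ ∞)
    (n : ℕ) :
    P {x | n ≤ arrivalCount (W · x) (ξ · x)} ≤
      b ^ n * ENNReal.ofReal (Real.exp (∑' i, a * P (ξ 1 ⁻¹' Set.Ioi i)).toReal) := by
  set E : {T : Finset ℕ // T ⊆ Icc 1 (n + #T)} → Set Ω := fun T =>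
    (⋂ i ∈ Icc 1 (n + #T.1), W i ⁻¹' {if i ∈ T.1 then 1 else 0}) ∩ ⋂ i ∈ T.1, ξ i ⁻¹' Set.Ioi i
  have hcover : {x | n ≤ arrivalCount (W · x) (ξ · x)} ⊆ ⋃ T, E T := fun x hx => by
    obtain ⟨T, hTI, hW, hξ⟩ := exists_pattern_of_le_arrivalCount (fun i => hWval i x) hx
    exact Set.mem_iUnion.2 ⟨⟨T, hTI⟩, by simp_all [E]⟩
  have hE : ∀ T, P (E T) = b ^ n * ∏ i ∈ T.1, a * P (ξ 1 ⁻¹' Set.Ioi i) := by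
    rintro ⟨T, hTI⟩
    rw [measure_pattern_inter hindep hW1 hW0 hTI, Nat.card_Icc, prod_mul_distrib, prod_const]
    simp only [(hξid _).measure_mem_eq measurableSet_Ioi, Nat.add_sub_cancel]
    ring
  calc P {x | n ≤ arrivalCount (W · x) (ξ · x)} ≤ ∑' T, P (E T) :=
        (measure_mono hcover).trans (measure_iUnion_le E)
    _ ≤ ∑' T : Finset ℕ, b ^ n * ∏ i ∈ T, a * P (ξ 1 ⁻¹' Set.Ioi i) := by
        simp_rw [hE]
        exact ENNReal.tsum_comp_le_tsum_of_injective Subtype.val_injective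
          (fun T => b ^ n * ∏ i ∈ T, a * P (ξ 1 ⁻¹' Set.Ioi i))
    _ ≤ _ := by
        rw [ENNReal.tsum_mul_left]
        gcongr
        exact ENNReal.tsum_finset_prod_le_exp _ hsum

end Pattern

theorem stmt9_general
    {Ω : Type*} [MeasurableSpace Ω] (P : MeasureTheory.Measure Ω)
    [MeasureTheory.IsProbabilityMeasure P]
    (p : ℝ) (hp : p ∈ Set.Ioo (0 : ℝ) 1)
    (ξ W : ℕ → Ω → ℕ)
    (hξmeas : ∀ i, Measurable (ξ i)) (hWmeas : ∀ i, Measurable (W i))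
    (hWval : ∀ i x, W i x ≤ 1)
    (hξid : ∀ i j, ProbabilityTheory.IdentDistrib (ξ i) (ξ j) P P)
    (hWlaw : ∀ i, P {x | W i x = 1} = ENNReal.ofReal p)
    (hindep : ProbabilityTheory.iIndepFun (Sum.elim W ξ) P)
    (R J : Ω → ℕ)
    (hR : R = fun x => sInf {r : ℕ | 1 ≤ r ∧ W r x = 1 ∧ ξ r x ≤ r})
    (hJ : J = fun x => ((Finset.Ico 1 (R x)).filter fun i => W i x = 0).card)
    (hξint : MeasureTheory.Integrable (fun x => (ξ 1 x : ℝ)) P) :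
    ∃ c C : ℝ, 0 < c ∧ c ≤ C ∧ ∀ n : ℕ, 1 ≤ n →
      c * (1 - p) ^ n ≤ (P {x | n ≤ J x}).toReal ∧
      (P {x | n ≤ J x}).toReal ≤ C * (1 - p) ^ n := by
  obtain ⟨hp0, hp1⟩ := hp
  have h1p : 0 < 1 - p := sub_pos.2 hp1
  obtain rfl : J = fun x => arrivalCount (W · x) (ξ · x) := by rw [hJ, hR]; rfl
  have hW0 : ∀ i, P (W i ⁻¹' {0}) = ENNReal.ofReal (1 - p) := fun i => by
    rw [measure_preimage_zero_eq_one_sub (hWmeas i) (hWval i), ENNReal.ofReal_sub _ hp0.le,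
      ENNReal.ofReal_one]
    exact congrArg _ (hWlaw i)
  set M := ∑' i, ENNReal.ofReal p * P (ξ 1 ⁻¹' Set.Ioi i)
  have hM : M ≠ ∞ := by
    simp only [M, ENNReal.tsum_mul_left]
    exact ENNReal.mul_ne_top ENNReal.ofReal_ne_top
      (tsum_measure_preimage_Ioi_ne_top (hξmeas 1) hξint)
  obtain ⟨m, hm⟩ := exists_measure_preimage_Iic_ne_zero (μ := P) (ξ 1)
  set q := (P (ξ 1 ⁻¹' Set.Iic m)).toReal
  have hq : 0 < q := ENNReal.toReal_pos hm (measure_ne_top P _)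
  refine ⟨p * (1 - p) ^ m * q, Real.exp M.toReal, by positivity, ?_, fun n _ => ⟨?_, ?_⟩⟩
  · calc p * (1 - p) ^ m * q ≤ 1 :=
          mul_le_one₀ (mul_le_one₀ hp1.le (by positivity) (pow_le_one₀ h1p.le (by linarith)))
            hq.le measureReal_le_one
      _ ≤ Real.exp M.toReal := Real.one_le_exp ENNReal.toReal_nonneg
  · calc _ = (ENNReal.ofReal p * ENNReal.ofReal (1 - p) ^ (n + m) *
          P (ξ 1 ⁻¹' Set.Iic m)).toReal := by
          simp only [ENNReal.toReal_mul, ENNReal.toReal_pow, ENNReal.toReal_ofReal, hp0.le, h1p.le]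
          ring
      _ ≤ _ := ENNReal.toReal_mono (measure_ne_top P _)
          (le_measure_le_arrivalCount hindep hWlaw hW0 (fun i => hξid i 1) n m)
  · calc _ ≤ (ENNReal.ofReal (1 - p) ^ n * ENNReal.ofReal (Real.exp M.toReal)).toReal :=
          ENNReal.toReal_mono (by finiteness)
            (measure_le_arrivalCount_le hindep hWlaw hW0 hWval (fun i => hξid i 1) hM n)
      _ = _ := by
          simp only [ENNReal.toReal_mul, ENNReal.toReal_pow, ENNReal.toReal_ofReal, h1p.le,
            (Real.exp_pos _).le]
          ring

/-- Assume `E[ξ₁] < ∞`. In the renewal construction, for every `p ∈ (0,1)`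
there are constants `0 < c_p ≤ C_p < ∞` such that for every `n ≥ 1`,
`c_p·(1−p)^n ≤ P(J_p ≥ n) ≤ C_p·(1−p)^n`. -/
theorem stmt9
    {Ω : Type*} [MeasurableSpace Ω] (P : MeasureTheory.Measure Ω)
    [MeasureTheory.IsProbabilityMeasure P]
    (p : ℝ) (hp : p ∈ Set.Ioo (0 : ℝ) 1)
    (ξ W : ℕ → Ω → ℕ) (q : ℕ → ℝ)
    (hξmeas : ∀ i, Measurable (ξ i)) (hWmeas : ∀ i, Measurable (W i))
    (hξpos : ∀ i x, 1 ≤ ξ i x) (hWval : ∀ i x, W i x ≤ 1)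
    (hξid : ∀ i j, ProbabilityTheory.IdentDistrib (ξ i) (ξ j) P P)
    (hWlaw : ∀ i, P {x | W i x = 1} = ENNReal.ofReal p)
    (hq : ∀ j, (P {x | ξ 1 x ≤ j}).toReal = q j)
    (hindep : ProbabilityTheory.iIndepFun (Sum.elim W ξ) P)
    (R J : Ω → ℕ)
    (hR : R = fun x => sInf {r : ℕ | 1 ≤ r ∧ W r x = 1 ∧ ξ r x ≤ r})
    (hJ : J = fun x => ((Finset.Ico 1 (R x)).filter fun i => W i x = 0).card)
    (hξint : MeasureTheory.Integrable (fun x => (ξ 1 x : ℝ)) P) :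
    ∃ c C : ℝ, 0 < c ∧ c ≤ C ∧ ∀ n : ℕ, 1 ≤ n →
      c * (1 - p) ^ n ≤ (P {x | n ≤ J x}).toReal ∧
      (P {x | n ≤ J x}).toReal ≤ C * (1 - p) ^ n :=
  stmt9_general P p hp ξ W hξmeas hWmeas hWval hξid hWlaw hindep R J hR hJ hξint
end

section
/- Let j_0, z ∈ (0,1), let (X_i)_{i≥1} be i.i.d. with P(X_1 = k) = (1 − j_0)·j_0^k for every integer k ≥ 0, and let (Y_i)_{i≥1} be i.i.d. nonnegative-integer-valued random variables, independent of (X_i), satisfying c_1·z^{y} ≤ P(Y_1 ≥ y) ≤ c_2·z^{y} for all integers y ≥ 1, for some constants 0 < c_1 ≤ c_2 < ∞. Set S_t := ∑_{i=1}^{t} X_i and let T := sup{ t ≥ 1 : Y_t ≥ S_t } (with sup ∅ := 0). Then T < ∞ almost surely and there exist constants 0 < C_1 ≤ C_2 < ∞ such that for every integer t ≥ 1: C_1·γ^{t} ≤ P(T ≥ t) ≤ C_2·γ^{t}, where γ := (1 − j_0)/(1 − j_0·z) ∈ (0,1). -/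
/-!
Let `A t = {S t ≤ Y t}`. Since `S t` and `Y t` are independent, `P(A t) = 𝔼[P(Y₁ ≥ k)]` at
`k = S t`, and the geometric tails of `Y₁` make this comparable to `𝔼[z ^ S t] = γ ^ t`, the
generating function of a sum of `t` independent geometric variables. Hence `∑ P(A t) < ∞`, so by
Borel–Cantelli only finitely many `A t` occur, and `P(T ≥ t)` is squeezed between `P(A t)` and
the union bound `∑_{u ≥ t} P(A u)`, both of order `γ ^ t`.
-/

open MeasureTheory ProbabilityTheory Filter ENNReal

lemma geometric_ratio_mem_Ioo {p r : ℝ} (hp : p ∈ Set.Ioo (0 : ℝ) 1) (hr : r ∈ Set.Ioo (0 : ℝ) 1) :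
    (1 - p) / (1 - p * r) ∈ Set.Ioo (0 : ℝ) 1 := by
  obtain ⟨hp0, hp1⟩ := hp
  obtain ⟨hr0, hr1⟩ := hr
  have hpr : 0 < 1 - p * r := by nlinarith
  exact ⟨div_pos (by linarith) hpr, (div_lt_one hpr).2 (by nlinarith)⟩

section LastVisit

variable {Ω : Type*} {A : ℕ → Set Ω}

def visits (A : ℕ → Set Ω) (x : Ω) : Set ℕ := {t | 1 ≤ t ∧ x ∈ A t}

/-- `sSup` on `ℕ` returns `0` when `visits A x` is empty or infinite. -/
noncomputable def lastVisit (A : ℕ → Set Ω) (x : Ω) : ℕ := sSup (visits A x)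

lemma le_lastVisit {t : ℕ} {x : Ω} (ht : 1 ≤ t) (hx : x ∈ A t) (hfin : (visits A x).Finite) :
    t ≤ lastVisit A x :=
  le_csSup hfin.bddAbove ⟨ht, hx⟩

lemma setOf_le_lastVisit_subset {t : ℕ} (ht : 1 ≤ t) :
    {x | t ≤ lastVisit A x} ⊆ ⋃ k, A (t + k) := by
  intro x hx
  by_contra hnot
  have hbound : t - 1 ∈ upperBounds (visits A x) := by
    rintro u ⟨-, hxu⟩
    by_contra! htu
    exact hnot (Set.mem_iUnion.2 ⟨u - t, by rwa [Nat.add_sub_cancel' (by omega)]⟩)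
  have hle : t ≤ t - 1 := le_trans (hx : t ≤ lastVisit A x) (csSup_le' hbound)
  omega

variable [MeasurableSpace Ω] {μ : Measure Ω}

lemma tsum_measure_add_le {C γ : ℝ} (hC : 0 ≤ C) (hγ0 : 0 ≤ γ) (hγ1 : γ < 1)
    (hA : ∀ s, 1 ≤ s → μ (A s) ≤ ENNReal.ofReal (C * γ ^ s)) {t : ℕ} (ht : 1 ≤ t) :
    ∑' k, μ (A (t + k)) ≤ ENNReal.ofReal (C / (1 - γ) * γ ^ t) :=
  calc ∑' k, μ (A (t + k)) ≤ ∑' k, ENNReal.ofReal (C * γ ^ t * γ ^ k) :=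
        ENNReal.tsum_le_tsum fun k => (hA _ (by omega)).trans_eq (by rw [pow_add, mul_assoc])
    _ = ENNReal.ofReal (∑' k, C * γ ^ t * γ ^ k) :=
        (ENNReal.ofReal_tsum_of_nonneg (fun k => by positivity)
          ((summable_geometric_of_lt_one hγ0 hγ1).mul_left _)).symm
    _ = ENNReal.ofReal (C / (1 - γ) * γ ^ t) := by
        rw [tsum_mul_left, tsum_geometric_of_lt_one hγ0 hγ1, div_eq_mul_inv]
        ring_nf

lemma measure_le_lastVisit_le {C γ : ℝ} (hC : 0 ≤ C) (hγ0 : 0 ≤ γ) (hγ1 : γ < 1)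
    (hA : ∀ s, 1 ≤ s → μ (A s) ≤ ENNReal.ofReal (C * γ ^ s)) {t : ℕ} (ht : 1 ≤ t) :
    μ {x | t ≤ lastVisit A x} ≤ ENNReal.ofReal (C / (1 - γ) * γ ^ t) :=
  (measure_mono (setOf_le_lastVisit_subset ht)).trans <|
    (measure_iUnion_le _).trans (tsum_measure_add_le hC hγ0 hγ1 hA ht)

lemma ae_finite_visits {C γ : ℝ} (hC : 0 ≤ C) (hγ0 : 0 ≤ γ) (hγ1 : γ < 1)
    (hA : ∀ s, 1 ≤ s → μ (A s) ≤ ENNReal.ofReal (C * γ ^ s)) :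
    ∀ᵐ x ∂μ, (visits A x).Finite := by
  have hBC := ae_eventually_notMem (μ := μ) (s := fun k => A (1 + k))
    (ne_top_of_le_ne_top ofReal_ne_top (tsum_measure_add_le hC hγ0 hγ1 hA le_rfl))
  filter_upwards [hBC] with x hx
  rw [← Nat.cofinite_eq_atTop, eventually_cofinite] at hx
  refine (hx.image (1 + ·)).subset ?_
  rintro t ⟨ht, hxt⟩
  exact ⟨t - 1, by simpa [Nat.add_sub_cancel' ht] using hxt, show 1 + (t - 1) = t by omega⟩

lemma measure_le_measure_le_lastVisit (hfin : ∀ᵐ x ∂μ, (visits A x).Finite) {t : ℕ}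
    (ht : 1 ≤ t) : μ (A t) ≤ μ {x | t ≤ lastVisit A x} :=
  measure_mono_ae <| by
    filter_upwards [hfin] with x hx hxA using le_lastVisit ht hxA hx

end LastVisit

section NatValued

variable {Ω : Type*} [MeasurableSpace Ω] {μ : Measure Ω} {U V : Ω → ℕ}

lemma lintegral_comp_eq_tsum (hU : Measurable U) (g : ℕ → ℝ≥0∞) :
    ∫⁻ x, g (U x) ∂μ = ∑' k, g k * μ {x | U x = k} := by
  rw [← lintegral_map (measurable_of_countable g) hU, lintegral_countable']
  refine tsum_congr fun k => ?_
  rw [Measure.map_apply hU (measurableSet_singleton k)]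
  rfl

lemma measure_le_eq_lintegral_of_indepFun (hU : Measurable U) (hV : Measurable V)
    (hUV : IndepFun U V μ) :
    μ {x | U x ≤ V x} = ∫⁻ x, μ {y | U x ≤ V y} ∂μ := by
  have hsplit : {x | U x ≤ V x} = ⋃ k, U ⁻¹' {k} ∩ V ⁻¹' Set.Ici k := by
    ext x
    simp
  rw [lintegral_comp_eq_tsum hU (fun k => μ {y | k ≤ V y}), hsplit, measure_iUnion]
  · refine tsum_congr fun k => ?_
    rw [hUV.measure_inter_preimage_eq_mul _ _ (measurableSet_singleton k) measurableSet_Ici,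
      mul_comm]
    rfl
  · exact fun k l hkl => Set.disjoint_left.2 fun x hk hl => hkl (hk.1.symm.trans hl.1)
  · exact fun k => (hU (measurableSet_singleton k)).inter (hV measurableSet_Ici)

lemma mul_lintegral_pow_le_measure_le (hU : Measurable U) (hV : Measurable V)
    (hUV : IndepFun U V μ) {c r : ℝ≥0∞} (htail : ∀ k, c * r ^ k ≤ μ {x | k ≤ V x}) :
    c * ∫⁻ x, r ^ U x ∂μ ≤ μ {x | U x ≤ V x} := by
  rw [measure_le_eq_lintegral_of_indepFun hU hV hUV]
  exact (lintegral_const_mul_le _ _).trans (lintegral_mono fun x => htail (U x))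

lemma measure_le_le_mul_lintegral_pow (hU : Measurable U) (hV : Measurable V)
    (hUV : IndepFun U V μ) {C r : ℝ≥0∞} (hC : C ≠ ∞) (htail : ∀ k, μ {x | k ≤ V x} ≤ C * r ^ k) :
    μ {x | U x ≤ V x} ≤ C * ∫⁻ x, r ^ U x ∂μ := by
  rw [measure_le_eq_lintegral_of_indepFun hU hV hUV, ← lintegral_const_mul' _ _ hC]
  exact lintegral_mono fun x => htail (U x)

lemma lintegral_pow_of_geometric [IsFiniteMeasure μ] (hU : Measurable U) {p r : ℝ}
    (hp0 : 0 ≤ p) (hp1 : p ≤ 1) (hr : 0 ≤ r) (hpr : p * r < 1)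
    (hgeom : ∀ k, (μ {x | U x = k}).toReal = (1 - p) * p ^ k) :
    ∫⁻ x, ENNReal.ofReal r ^ U x ∂μ = ENNReal.ofReal ((1 - p) / (1 - p * r)) := by
  have hpr0 : 0 ≤ p * r := by positivity
  calc ∫⁻ x, ENNReal.ofReal r ^ U x ∂μ
      = ∑' k, ENNReal.ofReal ((1 - p) * (p * r) ^ k) := by
        rw [lintegral_comp_eq_tsum hU]
        refine tsum_congr fun k => ?_
        rw [← ofReal_toReal (measure_ne_top μ _), hgeom, ← ofReal_pow hr,
          ← ofReal_mul (by positivity)]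
        ring_nf
    _ = ENNReal.ofReal (∑' k, (1 - p) * (p * r) ^ k) :=
        (ENNReal.ofReal_tsum_of_nonneg (fun k => mul_nonneg (by linarith) (by positivity))
          ((summable_geometric_of_lt_one hpr0 hpr).mul_left _)).symm
    _ = ENNReal.ofReal ((1 - p) / (1 - p * r)) := by
        rw [tsum_mul_left, tsum_geometric_of_lt_one hpr0 hpr, div_eq_mul_inv]

lemma lintegral_pow_finsetSum_eq_prod {ι : Type*} {f : ι → Ω → ℕ} (hf : ∀ i, Measurable (f i))
    (hindep : iIndepFun f μ) (s : Finset ι) (r : ℝ≥0∞) :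
    ∫⁻ x, r ^ (∑ i ∈ s, f i x) ∂μ = ∏ i ∈ s, ∫⁻ x, r ^ f i x ∂μ := by
  simp_rw [← Finset.prod_pow_eq_pow_sum]
  exact lintegral_prod_eq_prod_lintegral_of_indepFun s _
    (hindep.comp _ fun _ => measurable_of_countable _) fun i => measurable_const.pow (hf i)

end NatValued

section Tails

variable {Ω : Type*} [MeasurableSpace Ω] {μ : Measure Ω} [IsProbabilityMeasure μ] {U V : Ω → ℕ}

lemma ofReal_min_mul_pow_le_measure {c z : ℝ} (hc : 0 ≤ c) (hz : 0 ≤ z)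
    (htail : ∀ y : ℕ, 1 ≤ y → c * z ^ y ≤ (μ {x | y ≤ V x}).toReal) (k : ℕ) :
    ENNReal.ofReal (min c 1) * ENNReal.ofReal z ^ k ≤ μ {x | k ≤ V x} := by
  rcases k.eq_zero_or_pos with rfl | hk
  · simp
  · rw [← ofReal_pow hz, ← ofReal_mul (le_min hc zero_le_one),
      ← ofReal_toReal (measure_ne_top μ _)]
    exact ofReal_le_ofReal
      ((mul_le_mul_of_nonneg_right (min_le_left _ _) (by positivity)).trans (htail k hk))

lemma measure_le_ofReal_max_mul_pow {C z : ℝ} (hz : 0 ≤ z)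
    (htail : ∀ y : ℕ, 1 ≤ y → (μ {x | y ≤ V x}).toReal ≤ C * z ^ y) (k : ℕ) :
    μ {x | k ≤ V x} ≤ ENNReal.ofReal (max C 1) * ENNReal.ofReal z ^ k := by
  rcases k.eq_zero_or_pos with rfl | hk
  · simp
  · rw [← ofReal_pow hz, ← ofReal_mul (le_max_of_le_right zero_le_one),
      le_ofReal_iff_toReal_le (measure_ne_top μ _) (by positivity)]
    exact (htail k hk).trans (mul_le_mul_of_nonneg_right (le_max_left _ _) (by positivity))

lemma measure_le_comparable_of_tail (hU : Measurable U) (hV : Measurable V)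
    (hUV : IndepFun U V μ) {c C z g : ℝ} (hc : 0 ≤ c) (hz : 0 ≤ z)
    (hpgf : ∫⁻ x, ENNReal.ofReal z ^ U x ∂μ = ENNReal.ofReal g)
    (htail : ∀ y : ℕ, 1 ≤ y →
      c * z ^ y ≤ (μ {x | y ≤ V x}).toReal ∧ (μ {x | y ≤ V x}).toReal ≤ C * z ^ y) :
    ENNReal.ofReal (min c 1 * g) ≤ μ {x | U x ≤ V x} ∧
      μ {x | U x ≤ V x} ≤ ENNReal.ofReal (max C 1 * g) := by
  rw [ofReal_mul (le_min hc zero_le_one), ofReal_mul (le_max_of_le_right zero_le_one), ← hpgf]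
  exact ⟨mul_lintegral_pow_le_measure_le hU hV hUV
      (ofReal_min_mul_pow_le_measure hc hz fun y hy => (htail y hy).1),
    measure_le_le_mul_lintegral_pow hU hV hUV ofReal_ne_top
      (measure_le_ofReal_max_mul_pow hz fun y hy => (htail y hy).2)⟩

end Tails

lemma ProbabilityTheory.iIndepFun.indepFun_finsetSum_inl_inr {Ω ι κ β : Type*} [MeasurableSpace Ω] {μ : Measure Ω}
    [AddCommMonoid β] [MeasurableSpace β] [MeasurableAdd₂ β] {X : ι → Ω → β} {Y : κ → Ω → β}
    (hindep : iIndepFun (Sum.elim X Y) μ) (hX : ∀ i, Measurable (X i))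
    (hY : ∀ k, Measurable (Y k)) (s : Finset ι) (k : κ) :
    IndepFun (fun x => ∑ i ∈ s, X i x) (Y k) μ := by
  have h := hindep.indepFun_finsetSum_of_notMem (Sum.forall.2 ⟨hX, hY⟩)
    (s := s.map Function.Embedding.inl) (i := Sum.inr k) (by simp)
  simpa [Finset.sum_map, ← Finset.sum_fn] using h

theorem stmt15_general
    {Ω : Type*} [MeasurableSpace Ω] (P : MeasureTheory.Measure Ω)
    [MeasureTheory.IsProbabilityMeasure P]
    (j0 z : ℝ) (hj0 : j0 ∈ Set.Ioo (0 : ℝ) 1) (hz : z ∈ Set.Ioo (0 : ℝ) 1)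
    (X Y : ℕ → Ω → ℕ)
    (hXmeas : ∀ i, Measurable (X i)) (hYmeas : ∀ i, Measurable (Y i))
    (hindep : ProbabilityTheory.iIndepFun (Sum.elim X Y) P)
    (hXid : ∀ i j, 1 ≤ i → 1 ≤ j → ProbabilityTheory.IdentDistrib (X i) (X j) P P)
    (hYid : ∀ i j, 1 ≤ i → 1 ≤ j → ProbabilityTheory.IdentDistrib (Y i) (Y j) P P)
    (hXgeom : ∀ k : ℕ, (P {x | X 1 x = k}).toReal = (1 - j0) * j0 ^ k)
    (c₁ c₂ : ℝ) (hc₁ : 0 < c₁)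
    (hYtail : ∀ y : ℕ, 1 ≤ y →
      c₁ * z ^ y ≤ (P {x | y ≤ Y 1 x}).toReal ∧ (P {x | y ≤ Y 1 x}).toReal ≤ c₂ * z ^ y)
    (S : ℕ → Ω → ℕ) (hS : S = fun t x => ∑ i ∈ Finset.Icc 1 t, X i x)
    (T : Ω → ℕ) (hT : T = fun x => sSup {t : ℕ | 1 ≤ t ∧ S t x ≤ Y t x})
    (γ : ℝ) (hγ : γ = (1 - j0) / (1 - j0 * z)) :
    γ ∈ Set.Ioo (0 : ℝ) 1 ∧
    (∀ᵐ x ∂P, {t : ℕ | 1 ≤ t ∧ S t x ≤ Y t x}.Finite) ∧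
    (∃ C₁ C₂ : ℝ, 0 < C₁ ∧ C₁ ≤ C₂ ∧ ∀ t : ℕ, 1 ≤ t →
      C₁ * γ ^ t ≤ (P {x | t ≤ T x}).toReal ∧ (P {x | t ≤ T x}).toReal ≤ C₂ * γ ^ t) := by
  subst hS hT
  have hγ01 : γ ∈ Set.Ioo (0 : ℝ) 1 := hγ ▸ geometric_ratio_mem_Ioo hj0 hz
  have h1γ : 0 < 1 - γ := sub_pos.2 hγ01.2
  have hc₂' : 0 ≤ max c₂ 1 := le_max_of_le_right zero_le_one
  have hXindep : iIndepFun X P := iIndepFun.precomp (f := Sum.elim X Y) Sum.inl_injective hindep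
  have hpgfX : ∀ i, 1 ≤ i → ∫⁻ x, ENNReal.ofReal z ^ X i x ∂P = ENNReal.ofReal γ := fun i hi =>
    ((hXid i 1 hi le_rfl).comp (measurable_of_countable _)).lintegral_eq.trans <| hγ ▸
      lintegral_pow_of_geometric (hXmeas 1) hj0.1.le hj0.2.le hz.1.le
        (by nlinarith [hj0.1, hj0.2, hz.1, hz.2]) hXgeom
  have hpgfS : ∀ t, ∫⁻ x, ENNReal.ofReal z ^ (∑ i ∈ Finset.Icc 1 t, X i x) ∂P =
      ENNReal.ofReal (γ ^ t) := fun t => by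
    rw [lintegral_pow_finsetSum_eq_prod hXmeas hXindep,
      Finset.prod_congr rfl fun i hi => hpgfX i (Finset.mem_Icc.1 hi).1, Finset.prod_const,
      Nat.card_Icc, Nat.add_sub_cancel, ofReal_pow hγ01.1.le]
  have hYtail' : ∀ t, 1 ≤ t → ∀ y : ℕ, 1 ≤ y →
      c₁ * z ^ y ≤ (P {x | y ≤ Y t x}).toReal ∧ (P {x | y ≤ Y t x}).toReal ≤ c₂ * z ^ y :=
    fun t ht y hy => (hYid t 1 ht le_rfl).measure_mem_eq (measurableSet_Ici (a := y)) ▸ hYtail y hy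
  set A : ℕ → Set Ω := fun t => {x | ∑ i ∈ Finset.Icc 1 t, X i x ≤ Y t x}
  have hA : ∀ t, 1 ≤ t → ENNReal.ofReal (min c₁ 1 * γ ^ t) ≤ P (A t) ∧
      P (A t) ≤ ENNReal.ofReal (max c₂ 1 * γ ^ t) := fun t ht =>
    measure_le_comparable_of_tail (Finset.measurable_sum _ fun i _ => hXmeas i) (hYmeas t)
      (hindep.indepFun_finsetSum_inl_inr hXmeas hYmeas _ t) hc₁.le hz.1.le (hpgfS t) (hYtail' t ht)
  have hfin : ∀ᵐ x ∂P, (visits A x).Finite :=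
    ae_finite_visits hc₂' hγ01.1.le hγ01.2 fun s hs => (hA s hs).2
  refine ⟨hγ01, hfin, min c₁ 1, max c₂ 1 / (1 - γ), lt_min hc₁ one_pos, ?_, fun t ht => ⟨?_, ?_⟩⟩
  · exact (min_le_right _ _).trans ((le_max_right _ _).trans
      (le_div_self hc₂' h1γ (by linarith [hγ01.1])))
  · exact (ofReal_le_iff_le_toReal (measure_ne_top _ _)).1
      ((hA t ht).1.trans (measure_le_measure_le_lastVisit hfin ht))
  · exact toReal_le_of_le_ofReal (by have := hγ01.1; positivity)
      (measure_le_lastVisit_le hc₂' hγ01.1.le hγ01.2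
        (fun s hs => (hA s hs).2) ht)

/-- Let `(X i)` be i.i.d. Geometric(`1 − j₀`) (`P(X₁ = k) = (1−j₀)j₀ᵏ`) and
`(Y i)` i.i.d. ℕ-valued, independent of `(X i)`, with `c₁·z^y ≤ P(Y₁ ≥ y) ≤ c₂·z^y` for all
`y ≥ 1`. With `S t = ∑_{i=1}^t X i` and `T = sup{t ≥ 1 : Y t ≥ S t}` (`sup ∅ = 0`), the time
`T` is a.s. finite and `C₁·γ^t ≤ P(T ≥ t) ≤ C₂·γ^t` for all `t ≥ 1`, for some
`0 < C₁ ≤ C₂ < ∞`, where `γ = (1 − j₀)/(1 − j₀·z) ∈ (0,1)`. -/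
theorem stmt15
    {Ω : Type*} [MeasurableSpace Ω] (P : MeasureTheory.Measure Ω)
    [MeasureTheory.IsProbabilityMeasure P]
    (j0 z : ℝ) (hj0 : j0 ∈ Set.Ioo (0 : ℝ) 1) (hz : z ∈ Set.Ioo (0 : ℝ) 1)
    (X Y : ℕ → Ω → ℕ)
    (hXmeas : ∀ i, Measurable (X i)) (hYmeas : ∀ i, Measurable (Y i))
    (hindep : ProbabilityTheory.iIndepFun (Sum.elim X Y) P)
    (hXid : ∀ i j, 1 ≤ i → 1 ≤ j → ProbabilityTheory.IdentDistrib (X i) (X j) P P)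
    (hYid : ∀ i j, 1 ≤ i → 1 ≤ j → ProbabilityTheory.IdentDistrib (Y i) (Y j) P P)
    (hXgeom : ∀ k : ℕ, (P {x | X 1 x = k}).toReal = (1 - j0) * j0 ^ k)
    (c₁ c₂ : ℝ) (hc₁ : 0 < c₁) (hc₁₂ : c₁ ≤ c₂)
    (hYtail : ∀ y : ℕ, 1 ≤ y →
      c₁ * z ^ y ≤ (P {x | y ≤ Y 1 x}).toReal ∧ (P {x | y ≤ Y 1 x}).toReal ≤ c₂ * z ^ y)
    (S : ℕ → Ω → ℕ) (hS : S = fun t x => ∑ i ∈ Finset.Icc 1 t, X i x)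
    (T : Ω → ℕ) (hT : T = fun x => sSup {t : ℕ | 1 ≤ t ∧ S t x ≤ Y t x})
    (γ : ℝ) (hγ : γ = (1 - j0) / (1 - j0 * z)) :
    γ ∈ Set.Ioo (0 : ℝ) 1 ∧
    (∀ᵐ x ∂P, {t : ℕ | 1 ≤ t ∧ S t x ≤ Y t x}.Finite) ∧
    (∃ C₁ C₂ : ℝ, 0 < C₁ ∧ C₁ ≤ C₂ ∧ ∀ t : ℕ, 1 ≤ t →
      C₁ * γ ^ t ≤ (P {x | t ≤ T x}).toReal ∧ (P {x | t ≤ T x}).toReal ≤ C₂ * γ ^ t) :=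
  stmt15_general P j0 z hj0 hz X Y hXmeas hYmeas hindep hXid hYid hXgeom c₁ c₂ hc₁ hYtail S hS T hT
    γ hγ
end

section
/- Let p ∈ (0,1) and ζ-probability q ∈ (0,1]. Let (ω_t)_{t≥1} be i.i.d. Bernoulli(p) and (ζ_t)_{t≥1} i.i.d. Bernoulli(q), with the two sequences independent. Define H_t := ∑_{s=1}^{t} ω_s·ζ_s and A_t := ∑_{s=1}^{t}(1 − ω_s) for t ≥ 0 (H_0 = A_0 = 0), and let τ_C := inf{ t ≥ 0 : H_s ≥ A_s for all s ≥ t } (inf ∅ := ∞). If p·q > 1 − p, then τ_C < ∞ almost surely; if p·q ≤ 1 − p, then τ_C = ∞ almost surely. -/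
/-!
`H t - A t` is a random walk whose steps `ω ζ - (1 - ω)` are i.i.d., take values in `{-1, 0, 1}`
and have mean `p q - (1 - p)`. When the mean is nonzero, the strong law of large numbers makes the
sign of `H t - A t` eventually equal to the sign of the mean. In the critical case the walk is a
martingale with bounded increments, so by the one-sided martingale convergence theorem it can stay
bounded below only by converging; this is impossible, since every adversarial slot is a step `-1`.
-/

open MeasureTheory ProbabilityTheory Finset Filter Topology
open scoped NNReal

theorem eventually_pos_of_tendsto_div_natCast {s : ℕ → ℝ} {m : ℝ}
    (h : Tendsto (fun n => s n / n) atTop (𝓝 m)) (hm : 0 < m) : ∀ᶠ n in atTop, 0 < s n := by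
  filter_upwards [h.eventually (eventually_gt_nhds hm), eventually_gt_atTop 0] with n hn hn0
  exact (div_pos_iff_of_pos_right (Nat.cast_pos.2 hn0)).1 hn

namespace ProbabilityTheory

variable {Ω ι β : Type*} {mΩ : MeasurableSpace Ω} {μ : Measure Ω} [MeasurableSpace β]

theorem iIndepFun.prodMk_of_sumElim {f g : ι → Ω → β} (hf : ∀ i, Measurable (f i))
    (hg : ∀ i, Measurable (g i)) (h : iIndepFun (Sum.elim f g) μ) :
    iIndepFun (fun i x => (f i x, g i x)) μ := by
  have : IsProbabilityMeasure μ := h.isProbabilityMeasure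
  -- rectangles `f i ⁻¹' A ∩ g i ⁻¹' B` generate `σ(f i, g i)`; on them, independence is read off
  -- from that of `Sum.elim f g` on the index set `S ⊕ S`
  let rects : Set (Set (β × β)) :=
    Set.image2 (· ×ˢ ·) {s | MeasurableSet s} {t | MeasurableSet t}
  refine (iIndepFun_iff_iIndep _ _ _).2 <| iIndepSets.iIndep
    (fun i => ((hf i).prodMk (hg i)).comap_le)
    (fun i => Set.preimage (fun x => (f i x, g i x)) '' rects)
    (fun i => isPiSystem_prod.comap _)
    (fun i => by rw [← MeasurableSpace.comap_generateFrom, generateFrom_prod]) ?_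
  rw [iIndepSets_iff]
  intro S t ht
  have hrect : ∀ i ∈ S, ∃ A B, MeasurableSet A ∧ MeasurableSet B ∧ f i ⁻¹' A ∩ g i ⁻¹' B = t i := by
    intro i hi
    obtain ⟨_, ⟨A, hA, B, hB, rfl⟩, hAB⟩ := ht i hi
    exact ⟨A, B, hA, hB, hAB⟩
  choose! A B hA hB hAB using hrect
  have hinter : ⋂ i ∈ S, t i = ⋂ k ∈ S.disjSum S, Sum.elim f g k ⁻¹' Sum.elim A B k := by
    ext x
    simp only [Set.mem_iInter, Sum.forall, Finset.inl_mem_disjSum, Finset.inr_mem_disjSum,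
      Sum.elim_inl, Sum.elim_inr, Set.mem_preimage, ← forall₂_and]
    exact forall₂_congr fun i hi => by rw [← hAB i hi]; rfl
  calc μ (⋂ i ∈ S, t i)
      = ∏ k ∈ S.disjSum S, μ (Sum.elim f g k ⁻¹' Sum.elim A B k) := by
        rw [hinter]
        refine h.measure_inter_preimage_eq_mul _ ?_
        rintro (i | i) hi
        exacts [hA i (Finset.inl_mem_disjSum.1 hi), hB i (Finset.inr_mem_disjSum.1 hi)]
    _ = ∏ i ∈ S, μ (f i ⁻¹' A i) * μ (g i ⁻¹' B i) := by
        rw [Finset.prod_disjSum, ← Finset.prod_mul_distrib]; rfl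
    _ = ∏ i ∈ S, μ (t i) := by
        refine Finset.prod_congr rfl fun i hi => ?_
        rw [← hAB i hi]
        exact ((h.indepFun (i := .inl i) (j := .inr i) Sum.inl_ne_inr).measure_inter_preimage_eq_mul
          _ _ (hA i hi) (hB i hi)).symm


theorem martingale_sum_range_succ {X : ℕ → Ω → ℝ} (hX : ∀ i, StronglyMeasurable (X i))
    (hindep : iIndepFun X μ) (hint : ∀ i, Integrable (X i) μ) (hmean : ∀ i, μ[X i] = 0) :
    Martingale (fun n x => ∑ i ∈ range (n + 1), X i x) (Filtration.natural X hX) μ := by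
  have := hindep.isProbabilityMeasure
  refine martingale_of_condExp_sub_eq_zero_nat (fun n => ?_)
    (fun n => integrable_finsetSum _ fun i _ => hint i) fun n => ?_
  · refine Finset.stronglyMeasurable_fun_sum _ fun i hi => ?_
    exact (Filtration.stronglyAdapted_natural hX i).mono
      ((Filtration.natural X hX).mono (Nat.lt_succ_iff.1 (Finset.mem_range.1 hi)))
  · have hsub : (fun x => ∑ i ∈ range (n + 1 + 1), X i x) - (fun x => ∑ i ∈ range (n + 1), X i x)
        = X (n + 1) := by
      ext x; simp [Finset.sum_range_succ _ (n + 1)]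
    filter_upwards [hindep.condExp_natural_ae_eq_of_lt hX n.lt_succ_self] with x hx
    simp [hsub, hx, hmean]

theorem ae_not_tendsto_zero_of_identDistrib {X : ℕ → Ω → ℝ} (hint : Integrable (X 0) μ)
    (hindep : Pairwise fun i j => X i ⟂ᵢ[μ] X j) (hident : ∀ i, IdentDistrib (X i) (X 0) μ μ)
    (hne : ¬ X 0 =ᵐ[μ] 0) :
    ∀ᵐ x ∂μ, ¬ Tendsto (fun i => X i x) atTop (𝓝 0) := by
  have hpos : 0 < μ[fun x => |X 0 x|] := by
    rw [integral_pos_iff_support_of_nonneg (fun x => abs_nonneg _) hint.abs, pos_iff_ne_zero]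
    simpa [Function.support, EventuallyEq, ae_iff] using hne
  filter_upwards [strong_law_ae_real (fun i x => |X i x|) hint.abs
    (fun i j hij => (hindep hij).comp measurable_abs measurable_abs)
    (fun i => (hident i).comp measurable_abs)] with x hx hzero
  have hcesaro := ((tendsto_zero_iff_abs_tendsto_zero _).1 hzero).cesaro
  simp_rw [← div_eq_inv_mul] at hcesaro
  exact hpos.ne' (tendsto_nhds_unique hx hcesaro)

theorem ae_not_eventually_nonneg_sum_of_integral_eq_zero {X : ℕ → Ω → ℝ}
    (hX : ∀ i, StronglyMeasurable (X i)) (hindep : iIndepFun X μ)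
    (hident : ∀ i, IdentDistrib (X i) (X 0) μ μ) {C : ℝ≥0} (hbdd : ∀ i x, |X i x| ≤ C)
    (hmean : μ[X 0] = 0) (hne : ¬ X 0 =ᵐ[μ] 0) :
    ∀ᵐ x ∂μ, ¬ ∀ᶠ n in atTop, 0 ≤ ∑ i ∈ range n, X i x := by
  have := hindep.isProbabilityMeasure
  have hint : ∀ i, Integrable (X i) μ := fun i =>
    .of_bound (hX i).aestronglyMeasurable C (ae_of_all _ (hbdd i))
  set T : ℕ → Ω → ℝ := fun n x => ∑ i ∈ range (n + 1), X i x with hT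
  have hstep : ∀ n x, T (n + 1) x - T n x = X (n + 1) x := fun n x => by
    simp [hT, Finset.sum_range_succ _ (n + 1)]
  have hmart : Martingale T (Filtration.natural X hX) μ :=
    martingale_sum_range_succ hX hindep hint fun i => (hident i).integral_eq.trans hmean
  have hbddT : ∀ᵐ x ∂μ, ∀ n, |(-T) (n + 1) x - (-T) n x| ≤ C := ae_of_all _ fun x n => by
    simp only [Pi.neg_apply, neg_sub_neg]
    rw [abs_sub_comm, hstep]
    exact hbdd (n + 1) x
  filter_upwards [hmart.neg.submartingale.bddAbove_iff_exists_tendsto hbddT,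
    ae_not_tendsto_zero_of_identDistrib (hint 0) (fun i j hij => hindep.indepFun hij) hident hne]
    with x hconv hnot hev
  refine hnot ((tendsto_add_atTop_iff_nat 1).1 ?_)
  have hTnonneg : ∀ᶠ n in atTop, (-T) n x ≤ 0 := by
    filter_upwards [(tendsto_add_atTop_nat 1).eventually hev] with n hn
    simpa [hT] using hn
  -- `-T` is eventually nonpositive, hence bounded above, hence convergent: its steps tend to `0`
  obtain ⟨c, hc⟩ := hconv.1 (isBoundedUnder_of_eventually_le hTnonneg).bddAbove_range
  have hinc := sub_self c ▸ hc.sub (hc.comp (tendsto_add_atTop_nat 1))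
  refine hinc.congr fun n => ?_
  simp only [Function.comp_apply, Pi.neg_apply, neg_sub_neg, hstep]

theorem ae_eventually_sum_pos_of_integral_pos {X : ℕ → Ω → ℝ} (hint : Integrable (X 0) μ)
    (hindep : Pairwise fun i j => X i ⟂ᵢ[μ] X j) (hident : ∀ i, IdentDistrib (X i) (X 0) μ μ)
    (hmean : 0 < μ[X 0]) :
    ∀ᵐ x ∂μ, ∀ᶠ n in atTop, 0 < ∑ i ∈ range n, X i x := by
  filter_upwards [strong_law_ae_real X hint hindep hident] with x hx
  exact eventually_pos_of_tendsto_div_natCast hx hmean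

theorem ae_eventually_sum_neg_of_integral_neg {X : ℕ → Ω → ℝ} (hint : Integrable (X 0) μ)
    (hindep : Pairwise fun i j => X i ⟂ᵢ[μ] X j) (hident : ∀ i, IdentDistrib (X i) (X 0) μ μ)
    (hmean : μ[X 0] < 0) :
    ∀ᵐ x ∂μ, ∀ᶠ n in atTop, ∑ i ∈ range n, X i x < 0 := by
  filter_upwards [strong_law_ae_real X hint hindep hident] with x hx
  have := eventually_pos_of_tendsto_div_natCast (s := fun n => -∑ i ∈ range n, X i x)
    (by simpa only [neg_div] using hx.neg) (neg_pos.2 hmean)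
  simpa only [neg_pos] using this

end ProbabilityTheory

section NatValuedLeOne

variable {Ω : Type*}

lemma preimage_zero_eq_compl_of_le_one {f : Ω → ℕ} (hf1 : ∀ x, f x ≤ 1) :
    f ⁻¹' {0} = (f ⁻¹' {1})ᶜ := by
  ext x; have := hf1 x
  simp only [Set.mem_preimage, Set.mem_singleton_iff, Set.mem_compl_iff]; omega

variable [MeasurableSpace Ω] {P : Measure Ω}

lemma integral_natCast_of_le_one {f : Ω → ℕ} (hf : Measurable f) (hf1 : ∀ x, f x ≤ 1) :
    ∫ x, (f x : ℝ) ∂P = P.real {x | f x = 1} := by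
  have hind : (fun x => (f x : ℝ)) = Set.indicator {x | f x = 1} 1 := by
    ext x
    rcases Nat.le_one_iff_eq_zero_or_eq_one.1 (hf1 x) with h | h <;> simp [h]
  rw [hind]
  exact integral_indicator_one (hf (measurableSet_singleton 1))

lemma integrable_natCast_of_le_one [IsFiniteMeasure P] {f : Ω → ℕ} (hf : Measurable f)
    (hf1 : ∀ x, f x ≤ 1) : Integrable (fun x => (f x : ℝ)) P :=
  .of_bound ((measurable_of_countable _).comp hf).aestronglyMeasurable 1
    (ae_of_all _ fun x => by simpa using hf1 x)

lemma identDistrib_of_le_one [IsFiniteMeasure P] {f g : Ω → ℕ} (hf : Measurable f)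
    (hg : Measurable g) (hf1 : ∀ x, f x ≤ 1) (hg1 : ∀ x, g x ≤ 1)
    (h : P {x | f x = 1} = P {x | g x = 1}) : IdentDistrib f g P P := by
  refine ⟨hf.aemeasurable, hg.aemeasurable, Measure.ext_of_singleton fun a => ?_⟩
  rw [Measure.map_apply hf (measurableSet_singleton a),
    Measure.map_apply hg (measurableSet_singleton a)]
  have hempty {k : Ω → ℕ} (hk1 : ∀ x, k x ≤ 1) (a : ℕ) : k ⁻¹' {a + 2} = ∅ := by
    ext x; have := hk1 x
    simp only [Set.mem_preimage, Set.mem_singleton_iff, Set.mem_empty_iff_false, iff_false]; omega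
  rcases a with _ | _ | a
  · rw [preimage_zero_eq_compl_of_le_one hf1, preimage_zero_eq_compl_of_le_one hg1,
      measure_compl (hf (measurableSet_singleton 1)) (measure_ne_top _ _),
      measure_compl (hg (measurableSet_singleton 1)) (measure_ne_top _ _)]
    exact congrArg _ h
  · exact h
  · rw [hempty hf1, hempty hg1]

end NatValuedLeOne

section BitcoinModel

variable {Ω : Type*}

def leadIncrement (v : ℕ × ℕ) : ℝ := ((v.1 * v.2 : ℕ) : ℝ) - ((1 - v.1 : ℕ) : ℝ)

-- the increment of `H - A` from time `i` to time `i + 1`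
def leadStep (ω ζ : ℕ → Ω → ℕ) (i : ℕ) (x : Ω) : ℝ := leadIncrement (ω (i + 1) x, ζ (i + 1) x)

lemma leadIncrement_of_le_one {a : ℕ} (b : ℕ) (ha : a ≤ 1) :
    leadIncrement (a, b) = a * b - (1 - a) := by
  simp [leadIncrement, Nat.cast_sub ha]

lemma abs_leadIncrement_le_one {a b : ℕ} (ha : a ≤ 1) (hb : b ≤ 1) :
    |leadIncrement (a, b)| ≤ 1 := by
  interval_cases a <;> interval_cases b <;> norm_num [leadIncrement]

lemma adversarial_le_honest_iff (ω ζ : ℕ → Ω → ℕ) (n : ℕ) (x : Ω) :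
    ∑ s ∈ Icc 1 n, (1 - ω s x) ≤ ∑ s ∈ Icc 1 n, ω s x * ζ s x ↔
      0 ≤ ∑ i ∈ range n, leadStep ω ζ i x := by
  rw [← Nat.cast_le (α := ℝ), ← sub_nonneg, Nat.cast_sum, Nat.cast_sum, ← sum_sub_distrib,
    ← Finset.Ico_add_one_right_eq_Icc, Finset.sum_Ico_eq_sum_range, Nat.add_sub_cancel]
  simp only [leadStep, leadIncrement, add_comm 1]

variable [MeasurableSpace Ω] {P : Measure Ω} (ω ζ : ℕ → Ω → ℕ)

lemma measurable_leadStep (hωmeas : ∀ t, Measurable (ω t)) (hζmeas : ∀ t, Measurable (ζ t))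
    (i : ℕ) : Measurable (leadStep ω ζ i) :=
  (measurable_of_countable leadIncrement).comp ((hωmeas _).prodMk (hζmeas _))

lemma iIndepFun_leadStep (hωmeas : ∀ t, Measurable (ω t)) (hζmeas : ∀ t, Measurable (ζ t))
    (hindep : iIndepFun (Sum.elim ω ζ) P) : iIndepFun (leadStep ω ζ) P :=
  ((hindep.prodMk_of_sumElim hωmeas hζmeas).comp (fun _ => leadIncrement)
    fun _ => measurable_of_countable _).precomp (g := (· + 1)) (add_left_injective 1)

lemma identDistrib_leadStep [IsProbabilityMeasure P] {p q : ℝ}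
    (hωmeas : ∀ t, Measurable (ω t)) (hζmeas : ∀ t, Measurable (ζ t))
    (hωval : ∀ t x, ω t x ≤ 1) (hζval : ∀ t x, ζ t x ≤ 1)
    (hωlaw : ∀ t, P {x | ω t x = 1} = ENNReal.ofReal p)
    (hζlaw : ∀ t, P {x | ζ t x = 1} = ENNReal.ofReal q)
    (hindep : iIndepFun (Sum.elim ω ζ) P) (i : ℕ) :
    IdentDistrib (leadStep ω ζ i) (leadStep ω ζ 0) P P := by
  have hωζ (t : ℕ) : ω t ⟂ᵢ[P] ζ t := hindep.indepFun (i := .inl t) (j := .inr t) Sum.inl_ne_inr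
  have hω := identDistrib_of_le_one (hωmeas (i + 1)) (hωmeas 1) (hωval _) (hωval _)
    ((hωlaw _).trans (hωlaw _).symm)
  have hζ := identDistrib_of_le_one (hζmeas (i + 1)) (hζmeas 1) (hζval _) (hζval _)
    ((hζlaw _).trans (hζlaw _).symm)
  exact (hω.prodMk hζ (hωζ _) (hωζ _)).comp (measurable_of_countable leadIncrement)

lemma integral_leadStep_zero [IsProbabilityMeasure P] {p q : ℝ} (hp : 0 ≤ p) (hq : 0 ≤ q)
    (hωmeas : ∀ t, Measurable (ω t)) (hζmeas : ∀ t, Measurable (ζ t))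
    (hωval : ∀ t x, ω t x ≤ 1) (hζval : ∀ t x, ζ t x ≤ 1)
    (hωlaw : ∀ t, P {x | ω t x = 1} = ENNReal.ofReal p)
    (hζlaw : ∀ t, P {x | ζ t x = 1} = ENNReal.ofReal q)
    (hindep : iIndepFun (Sum.elim ω ζ) P) :
    P[leadStep ω ζ 0] = p * q - (1 - p) := by
  have hmean {f : Ω → ℕ} {r : ℝ} (hr : 0 ≤ r) (hf : Measurable f) (hf1 : ∀ x, f x ≤ 1)
      (hlaw : P {x | f x = 1} = ENNReal.ofReal r) : ∫ x, (f x : ℝ) ∂P = r := by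
    rw [integral_natCast_of_le_one hf hf1, measureReal_def, hlaw, ENNReal.toReal_ofReal hr]
  have hωζ : (fun x => (ω 1 x : ℝ)) ⟂ᵢ[P] (fun x => (ζ 1 x : ℝ)) :=
    (hindep.indepFun (i := .inl 1) (j := .inr 1) Sum.inl_ne_inr).comp
      (measurable_of_countable _) (measurable_of_countable _)
  calc P[leadStep ω ζ 0]
      = ∫ x, (ω 1 x : ℝ) * ζ 1 x - (1 - ω 1 x) ∂P :=
        integral_congr_ae (ae_of_all _ fun x => leadIncrement_of_le_one _ (hωval 1 x))
    _ = (∫ x, (ω 1 x : ℝ) ∂P) * (∫ x, (ζ 1 x : ℝ) ∂P) - (1 - ∫ x, (ω 1 x : ℝ) ∂P) := by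
        have hω := integrable_natCast_of_le_one (P := P) (hωmeas 1) (hωval 1)
        have hζ := integrable_natCast_of_le_one (P := P) (hζmeas 1) (hζval 1)
        have hmul : Integrable (fun x => (ω 1 x : ℝ) * ζ 1 x) P := hωζ.integrable_mul hω hζ
        have hEmul : ∫ x, (ω 1 x : ℝ) * ζ 1 x ∂P = (∫ x, (ω 1 x : ℝ) ∂P) * ∫ x, (ζ 1 x : ℝ) ∂P :=
          hωζ.integral_mul_eq_mul_integral hω.1 hζ.1
        have hcompl : Integrable (fun x => 1 - (ω 1 x : ℝ)) P := (integrable_const 1).sub hω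
        rw [integral_sub hmul hcompl, integral_sub (integrable_const 1) hω,
          integral_const, hEmul, probReal_univ, one_smul]
    _ = p * q - (1 - p) := by
        rw [hmean hp (hωmeas 1) (hωval 1) (hωlaw 1), hmean hq (hζmeas 1) (hζval 1) (hζlaw 1)]

lemma not_leadStep_ae_eq_zero [IsProbabilityMeasure P] {p : ℝ} (hp : p < 1)
    (hωmeas : ∀ t, Measurable (ω t)) (hωval : ∀ t x, ω t x ≤ 1)
    (hωlaw : ∀ t, P {x | ω t x = 1} = ENNReal.ofReal p) :
    ¬ leadStep ω ζ 0 =ᵐ[P] 0 := by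
  intro h
  have hsub : ω 1 ⁻¹' {0} ⊆ {x | leadStep ω ζ 0 x ≠ 0} := fun x hx => by
    simp [leadStep, leadIncrement, Set.mem_singleton_iff.1 (Set.mem_preimage.1 hx)]
  have hnull := measure_mono_null hsub (ae_iff.1 h)
  rw [preimage_zero_eq_compl_of_le_one (hωval 1),
    measure_compl (hωmeas 1 (measurableSet_singleton 1)) (measure_ne_top _ _), measure_univ,
    show P (ω 1 ⁻¹' {1}) = _ from hωlaw 1, tsub_eq_zero_iff_le, ENNReal.one_le_ofReal] at hnull
  linarith

end BitcoinModel

/-- Stylized Bitcoin model: `(ω t)` i.i.d. Bernoulli(`p`) and `(ζ t)` i.i.d.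
Bernoulli(`q`) (encoded in `{0,1} ⊆ ℕ`), the two sequences jointly independent;
`H t = ∑_{s=1}^t ω s · ζ s` (honest height) and `A t = ∑_{s=1}^t (1 − ω s)` (adversarial
height). The time to consensus `τ_C = inf{t : ∀ s ≥ t, H s ≥ A s}` is a.s. finite when
`p·q > 1 − p` and a.s. infinite when `p·q ≤ 1 − p`. -/
theorem stmt16
    {Ω : Type*} [MeasurableSpace Ω] (P : MeasureTheory.Measure Ω)
    [MeasureTheory.IsProbabilityMeasure P]
    (p q : ℝ) (hp : p ∈ Set.Ioo (0 : ℝ) 1) (hq : q ∈ Set.Ioc (0 : ℝ) 1)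
    (ω ζ : ℕ → Ω → ℕ)
    (hωmeas : ∀ t, Measurable (ω t)) (hζmeas : ∀ t, Measurable (ζ t))
    (hωval : ∀ t x, ω t x ≤ 1) (hζval : ∀ t x, ζ t x ≤ 1)
    (hωlaw : ∀ t, P {x | ω t x = 1} = ENNReal.ofReal p)
    (hζlaw : ∀ t, P {x | ζ t x = 1} = ENNReal.ofReal q)
    (hindep : ProbabilityTheory.iIndepFun (Sum.elim ω ζ) P)
    (H A : ℕ → Ω → ℕ)
    (hH : H = fun t x => ∑ s ∈ Finset.Icc 1 t, ω s x * ζ s x)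
    (hA : A = fun t x => ∑ s ∈ Finset.Icc 1 t, (1 - ω s x)) :
    (1 - p < p * q → ∀ᵐ x ∂P, ∃ t : ℕ, ∀ s : ℕ, t ≤ s → A s x ≤ H s x) ∧
    (p * q ≤ 1 - p → ∀ᵐ x ∂P, ¬ ∃ t : ℕ, ∀ s : ℕ, t ≤ s → A s x ≤ H s x) := by
  subst hH hA
  simp only [adversarial_le_honest_iff, ← eventually_atTop]
  have hmeas := measurable_leadStep ω ζ hωmeas hζmeas
  have hiIndep := iIndepFun_leadStep ω ζ hωmeas hζmeas hindep
  have hpairwise : Pairwise fun i j => leadStep ω ζ i ⟂ᵢ[P] leadStep ω ζ j :=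
    fun _ _ hij => hiIndep.indepFun hij
  have hident := identDistrib_leadStep ω ζ hωmeas hζmeas hωval hζval hωlaw hζlaw hindep
  have hint : Integrable (leadStep ω ζ 0) P := .of_bound (hmeas 0).aestronglyMeasurable 1
    (ae_of_all _ fun x => abs_leadIncrement_le_one (hωval 1 x) (hζval 1 x))
  have hmean := integral_leadStep_zero ω ζ hp.1.le hq.1.le hωmeas hζmeas hωval hζval hωlaw hζlaw
    hindep
  refine ⟨fun hsuper => ?_, fun hle => ?_⟩
  · filter_upwards [ae_eventually_sum_pos_of_integral_pos hint hpairwise hident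
      (by linarith)] with x hx
    exact hx.mono fun n => le_of_lt
  rcases hle.lt_or_eq with hsub | hcrit
  · filter_upwards [ae_eventually_sum_neg_of_integral_neg hint hpairwise hident
      (by linarith)] with x hx hnonneg
    obtain ⟨n, hneg, hn⟩ := (hx.and hnonneg).exists
    exact hneg.not_ge hn
  · exact ae_not_eventually_nonneg_sum_of_integral_eq_zero (fun i => (hmeas i).stronglyMeasurable)
      hiIndep hident (C := 1) (fun i x => abs_leadIncrement_le_one (hωval _ x) (hζval _ x))
      (by linarith) (not_leadStep_ae_eq_zero ω ζ hp.2 hωmeas hωval hωlaw)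
end
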